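/- arXiv:2509.25997 — 8 statements merged into one kernel-verified Lean document; each statement's English description precedes it below -/
import Mathlib

section
/- Let d ≥ 1, let q be an odd prime power, let S be a set of ‖·‖-spheres in F_q^d with arbitrary radii (zero radii allowed), and let P ⊆ F_q^d. Then |I(P,S) − q^{−1}|P||S|| ≤ √(q^{d}|P||S|). -/
open Finset

section Defs
variable {F : Type*} [Field F] [Fintype F] [DecidableEq F]

/-- `x₁x₂ + x₃x₄ + ⋯` : the sum of the first `k` products of consecutive pairs
of coordinates. -/
def pairsForm {d : ℕ} (k : ℕ) (x : Fin d → F) : F :=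
  ∑ j ∈ Finset.range k, if h : 2*j+1 < d then x ⟨2*j, by omega⟩ * x ⟨2*j+1, h⟩ else 0

/-- `Q₁^d(x) = x₁x₂ + x₃x₄ + ⋯ + x_{d−1}x_d` (for even `d`). -/
def Q1form {d : ℕ} (x : Fin d → F) : F := pairsForm (d/2) x

/-- `Q₂^d(x) = x₁x₂ + ⋯ + x_{d−3}x_{d−2} + x_{d−1}² − a·x_d²` (for even `d`,
`a` a non-square). -/
def Q2form (a : F) {d : ℕ} (x : Fin d → F) : F :=
  pairsForm ((d-2)/2) x +
    (if h : 2 ≤ d then x ⟨d-2, by omega⟩ ^ 2 - a * x ⟨d-1, by omega⟩ ^ 2 else 0)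

/-- `Q₃^d(x) = x₁x₂ + ⋯ + x_{d−2}x_{d−1} − x_d²` (for odd `d`). -/
def Q3form {d : ℕ} (x : Fin d → F) : F :=
  pairsForm ((d-1)/2) x - (if h : 1 ≤ d then x ⟨d-1, by omega⟩ ^ 2 else 0)

/-- `Q₄^d(x) = x₁x₂ + ⋯ + x_{d−2}x_{d−1} − a·x_d²` (for odd `d`, `a` a non-square). -/
def Q4form (a : F) {d : ℕ} (x : Fin d → F) : F :=
  pairsForm ((d-1)/2) x - (if h : 1 ≤ d then a * x ⟨d-1, by omega⟩ ^ 2 else 0)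

/-- The quadratic form `Q_i^d`. -/
def Qi (a : F) (i : ℕ) {d : ℕ} (x : Fin d → F) : F :=
  if i = 1 then Q1form x else if i = 2 then Q2form a x
  else if i = 3 then Q3form x else Q4form a x

/-- `‖x‖ = x₁² + ⋯ + x_d²`. -/
def normForm {d : ℕ} (x : Fin d → F) : F := ∑ i, x i ^ 2

/-- `I(P,S)`: the number of incidences between a set `P` of points and a set `S`
of `Qf`-spheres, each sphere given as a (center, radius) pair. -/
def sphIncid {d : ℕ} (Qf : (Fin d → F) → F)
    (P : Finset (Fin d → F)) (S : Finset ((Fin d → F) × F)) : ℕ :=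
  ((P ×ˢ S).filter fun z => Qf (z.1 - z.2.1) = z.2.2).card

/-- The set of points of the `Qf`-sphere `s` (given as a (center, radius) pair). -/
def spherePts {d : ℕ} (Qf : (Fin d → F) → F) (s : (Fin d → F) × F) : Finset (Fin d → F) :=
  Finset.univ.filter fun x => Qf (x - s.1) = s.2

end Defs

section AuxIncid
variable {F : Type*} [Field F] [Fintype F] [DecidableEq F]

lemma lsum_add_single {d : ℕ} (a c : Fin d → F) (i0 : Fin d) (t : F) :
    ∑ i, a i * ((c + Pi.single i0 t : Fin d → F) i) = (∑ i, a i * c i) + a i0 * t := by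
  simp only [Pi.add_apply, mul_add, Finset.sum_add_distrib]
  congr 1
  rw [Finset.sum_eq_single i0]
  · simp
  · intro i _ hi; simp [Pi.single_eq_of_ne hi]
  · simp

lemma fiber_shift {d : ℕ} (a : Fin d → F) (i0 : Fin d) (ha : a i0 ≠ 0) (b b' : F) :
    (univ.filter fun c : Fin d → F => ∑ i, a i * c i = b).card
      = (univ.filter fun c : Fin d → F => ∑ i, a i * c i = b').card := by
  refine Finset.card_nbij' (fun c => c + Pi.single i0 ((b' - b) / a i0))
      (fun c => c + Pi.single i0 ((b - b') / a i0)) ?_ ?_ ?_ ?_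
  · intro c hc
    simp only [mem_coe, mem_filter, mem_univ, true_and] at hc ⊢
    rw [lsum_add_single, hc, mul_div_cancel₀ _ ha]; ring
  · intro c hc
    simp only [mem_coe, mem_filter, mem_univ, true_and] at hc ⊢
    rw [lsum_add_single, hc, mul_div_cancel₀ _ ha]; ring
  · intro c _
    show c + _ + _ = c
    rw [add_assoc, ← Pi.single_add,
      show (b' - b) / a i0 + (b - b') / a i0 = 0 by ring, Pi.single_zero, add_zero]
  · intro c _
    show c + _ + _ = c
    rw [add_assoc, ← Pi.single_add,
      show (b - b') / a i0 + (b' - b) / a i0 = 0 by ring, Pi.single_zero, add_zero]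

lemma fiber_card {d : ℕ} (hd : 1 ≤ d) (a : Fin d → F) (i0 : Fin d) (ha : a i0 ≠ 0) (b : F) :
    (univ.filter fun c : Fin d → F => ∑ i, a i * c i = b).card = Fintype.card F ^ (d - 1) := by
  have htot : Fintype.card F ^ d
      = Fintype.card F * (univ.filter fun c : Fin d → F => ∑ i, a i * c i = b).card := by
    calc Fintype.card F ^ d = (univ : Finset (Fin d → F)).card := by simp [Fintype.card_pi]
      _ = ∑ b' : F, (univ.filter fun c : Fin d → F => ∑ i, a i * c i = b').card :=
          Finset.card_eq_sum_card_fiberwise (fun c _ => mem_univ _)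
      _ = ∑ _b' : F, (univ.filter fun c : Fin d → F => ∑ i, a i * c i = b).card :=
          Finset.sum_congr rfl (fun b' _ => fiber_shift a i0 ha b' b)
      _ = _ := by rw [Finset.sum_const, card_univ, smul_eq_mul]
  have h2 : Fintype.card F ^ d = Fintype.card F * Fintype.card F ^ (d - 1) := by
    conv_lhs => rw [← Nat.succ_pred_eq_of_pos hd]
    rw [pow_succ']; rfl
  rw [h2] at htot
  exact (Nat.eq_of_mul_eq_mul_left Fintype.card_pos htot).symm

lemma count_pairs {d : ℕ} (hd : 1 ≤ d) (h2 : (2 : F) ≠ 0) {x y : Fin d → F} (hxy : x ≠ y) :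
    (univ.filter fun c : Fin d → F => normForm (x - c) = normForm (y - c)).card
      = Fintype.card F ^ (d - 1) := by
  obtain ⟨i0, hi0⟩ : ∃ i, x i ≠ y i := by
    by_contra h; push_neg at h; exact hxy (funext h)
  set a : Fin d → F := fun i => 2 * (y i - x i) with ha_def
  have ha : a i0 ≠ 0 := mul_ne_zero h2 (sub_ne_zero.2 (Ne.symm hi0))
  have hiff : ∀ c : Fin d → F,
      (normForm (x - c) = normForm (y - c)) ↔ ∑ i, a i * c i = ∑ i, (y i ^ 2 - x i ^ 2) := by
    intro c
    rw [← sub_eq_zero, ← sub_eq_zero (a := ∑ i, a i * c i)]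
    have : normForm (x - c) - normForm (y - c)
        = (∑ i, a i * c i) - ∑ i, (y i ^ 2 - x i ^ 2) := by
      unfold normForm
      rw [← Finset.sum_sub_distrib, ← Finset.sum_sub_distrib]
      refine Finset.sum_congr rfl fun i _ => ?_
      simp only [Pi.sub_apply, ha_def]
      ring
    rw [this]
  rw [Finset.filter_congr (fun c _ => hiff c)]
  exact fiber_card hd a i0 ha _

end AuxIncid

/-- Point–sphere incidence bound for spheres of arbitrary radii. -/
theorem stmt2 {F : Type*} [Field F] [Fintype F] [DecidableEq F]
    (hq : Odd (Fintype.card F)) {d : ℕ} (hd : 1 ≤ d)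
    (P : Finset (Fin d → F)) (S : Finset ((Fin d → F) × F)) :
    |(sphIncid normForm P S : ℝ) - (Fintype.card F : ℝ)⁻¹ * P.card * S.card|
      ≤ Real.sqrt ((Fintype.card F : ℝ) ^ d * P.card * S.card) := by
  classical
  obtain ⟨e, rfl⟩ : ∃ e, d = e + 1 := ⟨d - 1, by omega⟩
  set q : ℝ := (Fintype.card F : ℝ) with hq_def
  have hqpos : (0 : ℝ) < q := by
    rw [hq_def]; exact_mod_cast Fintype.card_pos
  have hq0 : q ≠ 0 := ne_of_gt hqpos
  have h2 : (2 : F) ≠ 0 := by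
    refine Ring.two_ne_zero fun hchar => ?_
    have := FiniteField.even_card_of_char_two hchar
    rw [Nat.odd_iff] at hq
    omega
  set δ : (Fin (e+1) → F) → ((Fin (e+1) → F) × F) → ℝ :=
    fun x s => if normForm (x - s.1) = s.2 then 1 else 0 with hδ
  set g : ((Fin (e+1) → F) × F) → ℝ := fun s => ∑ x ∈ P, (δ x s - q⁻¹) with hg
  -- Step B : the error term is ∑ s ∈ S, g s
  have hE : (sphIncid normForm P S : ℝ) - q⁻¹ * P.card * S.card = ∑ s ∈ S, g s := by
    have h1 : (sphIncid normForm P S : ℝ) = ∑ x ∈ P, ∑ s ∈ S, δ x s := by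
      unfold sphIncid
      rw [Finset.card_filter]
      push_cast
      rw [Finset.sum_product]
    have h3 : ∀ s, ∑ x ∈ P, (δ x s - q⁻¹) = (∑ x ∈ P, δ x s) - P.card * q⁻¹ := by
      intro s
      rw [Finset.sum_sub_distrib, Finset.sum_const, nsmul_eq_mul]
    rw [h1, hg]
    rw [Finset.sum_congr rfl (fun s _ => h3 s), Finset.sum_sub_distrib,
      Finset.sum_const, nsmul_eq_mul, Finset.sum_comm]
    ring
  -- Step: column sums
  have hB : ∀ x : Fin (e+1) → F, ∑ s : (Fin (e+1) → F) × F, δ x s = q ^ (e+1) := by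
    intro x
    rw [Fintype.sum_prod_type]
    have h4 : ∀ c : Fin (e+1) → F, ∑ r : F, δ x (c, r) = 1 := by
      intro c; simp [hδ]
    rw [Finset.sum_congr rfl (fun c _ => h4 c), Finset.sum_const, card_univ, nsmul_eq_mul,
      mul_one, hq_def]
    rw [Fintype.card_fun]
    push_cast
    simp
  have hA : ∀ x y : Fin (e+1) → F, ∑ s : (Fin (e+1) → F) × F, δ x s * δ y s
      = ((univ.filter fun c : Fin (e+1) → F =>
          normForm (x - c) = normForm (y - c)).card : ℝ) := by
    intro x y
    rw [Fintype.sum_prod_type]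
    have inner : ∀ c, ∑ r : F, δ x (c, r) * δ y (c, r)
        = if normForm (x - c) = normForm (y - c) then (1:ℝ) else 0 := by
      intro c
      simp only [hδ, mul_ite, mul_one, mul_zero, Finset.sum_ite_eq, mem_univ, if_true]
    rw [Finset.sum_congr rfl (fun c _ => inner c), Finset.sum_boole]
  have hcard : (Fintype.card ((Fin (e+1) → F) × F) : ℝ) = q ^ (e + 2) := by
    rw [Fintype.card_prod, Fintype.card_fun, hq_def]
    push_cast
    rw [Fintype.card_fin]
    ring
  -- Step: the kernel
  have hK : ∀ x y : Fin (e+1) → F,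
      ∑ s : (Fin (e+1) → F) × F, (δ x s - q⁻¹) * (δ y s - q⁻¹)
        = if x = y then q ^ (e + 1) - q ^ e else 0 := by
    intro x y
    have expand : ∀ s : (Fin (e+1) → F) × F, (δ x s - q⁻¹) * (δ y s - q⁻¹)
        = δ x s * δ y s - q⁻¹ * δ x s - q⁻¹ * δ y s + q⁻¹ * q⁻¹ := by
      intro s; ring
    rw [Finset.sum_congr rfl (fun s _ => expand s), Finset.sum_add_distrib,
      Finset.sum_sub_distrib, Finset.sum_sub_distrib, ← Finset.mul_sum, ← Finset.mul_sum,
      hB x, hB y, hA x y, Finset.sum_const, card_univ, nsmul_eq_mul, hcard]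
    rcases eq_or_ne x y with rfl | hxy
    · rw [if_pos rfl]
      have hfull : (univ.filter fun c : Fin (e+1) → F =>
          normForm (x - c) = normForm (x - c)) = univ := by
        apply Finset.filter_true_of_mem; intro c _; rfl
      rw [hfull, card_univ, hq_def]
      rw [Fintype.card_fun, Fintype.card_fin]
      push_cast
      field_simp
      ring
    · rw [if_neg hxy, count_pairs (by omega) h2 hxy]
      push_cast
      rw [hq_def]
      push_cast
      have hc0 : ((Fintype.card F : ℝ)) ≠ 0 := hq0
      field_simp
      ring
  -- Step: second moment
  have hT : ∑ s : (Fin (e+1) → F) × F, g s ^ 2 = P.card * (q ^ (e+1) - q ^ e) := by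
    have hsq : ∀ s, g s ^ 2 = ∑ x ∈ P, ∑ y ∈ P, (δ x s - q⁻¹) * (δ y s - q⁻¹) := by
      intro s
      rw [sq, hg, Finset.sum_mul_sum]
    rw [Finset.sum_congr rfl (fun s _ => hsq s), Finset.sum_comm]
    have hswap : ∀ x ∈ P, ∑ s : (Fin (e+1) → F) × F, ∑ y ∈ P, (δ x s - q⁻¹) * (δ y s - q⁻¹)
        = ∑ y ∈ P, ∑ s : (Fin (e+1) → F) × F, (δ x s - q⁻¹) * (δ y s - q⁻¹) :=
      fun x _ => Finset.sum_comm
    rw [Finset.sum_congr rfl hswap]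
    have hrow : ∀ x ∈ P, ∑ y ∈ P, ∑ s : (Fin (e+1) → F) × F, (δ x s - q⁻¹) * (δ y s - q⁻¹)
        = q ^ (e+1) - q ^ e := by
      intro x hx
      rw [Finset.sum_congr rfl (fun y _ => hK x y), Finset.sum_ite_eq, if_pos hx]
    rw [Finset.sum_congr rfl hrow, Finset.sum_const, nsmul_eq_mul]
  -- Cauchy–Schwarz and conclusion
  rw [hE, ← Real.sqrt_sq_eq_abs]
  apply Real.sqrt_le_sqrt
  have hCS : (∑ s ∈ S, g s) ^ 2 ≤ S.card * ∑ s : (Fin (e+1) → F) × F, g s ^ 2 := by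
    calc (∑ s ∈ S, g s) ^ 2 ≤ S.card * ∑ s ∈ S, g s ^ 2 :=
          sq_sum_le_card_mul_sum_sq
      _ ≤ S.card * ∑ s : (Fin (e+1) → F) × F, g s ^ 2 := by
          apply mul_le_mul_of_nonneg_left
            (Finset.sum_le_sum_of_subset_of_nonneg (Finset.subset_univ S)
              (fun _ _ _ => sq_nonneg _))
            (Nat.cast_nonneg _)
  calc (∑ s ∈ S, g s) ^ 2 ≤ S.card * (P.card * (q ^ (e+1) - q ^ e)) := by
        rw [← hT]; exact hCS
    _ ≤ q ^ (e+1) * P.card * S.card := by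
        have h1 : (0:ℝ) ≤ q ^ e := pow_nonneg hqpos.le e
        have h2 : (0:ℝ) ≤ (P.card : ℝ) := Nat.cast_nonneg _
        have h3 : (0:ℝ) ≤ (S.card : ℝ) := Nat.cast_nonneg _
        nlinarith [mul_nonneg (mul_nonneg h1 h2) h3]
end

section
/- Let G be a bipartite graph with finite vertex classes L and U (given by an adjacency relation ∼ between L and U), and let p be a positive real number with |L|^{−1} ≤ p ≤ |L|^{−1}|U|^{−1}E(L,U). Then for every R ⊆ U, (E(L,R) − p|L||R|)² ≤ |R|·( Σ_{u ∈ U} Σ_{(v₁,v₂) ∈ L×L, v₁ ≠ v₂} (𝟙[v₁ ∼ u]·𝟙[v₂ ∼ u] − p²) + E(L,U) ). -/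
open Finset

/-- A variant of Thomason's pseudo-random graph bound for bipartite graphs. -/
theorem stmt7 {L U : Type*} [Fintype L] [Fintype U] [DecidableEq L]
    (Adj : L → U → Prop) [∀ v u, Decidable (Adj v u)]
    (p : ℝ) (hp0 : 0 < p)
    (hp1 : (Fintype.card L : ℝ)⁻¹ ≤ p)
    (hp2 : p ≤ (Fintype.card L : ℝ)⁻¹ * (Fintype.card U : ℝ)⁻¹ *
      ((Finset.univ.filter fun z : L × U => Adj z.1 z.2).card : ℝ))
    (R : Finset U) :
    ((((Finset.univ ×ˢ R).filter fun z : L × U => Adj z.1 z.2).card : ℝ)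
        - p * Fintype.card L * R.card) ^ 2
      ≤ (R.card : ℝ) *
          ((∑ u : U, ∑ v₁ : L, ∑ v₂ : L, if v₁ ≠ v₂ then
              ((if Adj v₁ u then (1 : ℝ) else 0) * (if Adj v₂ u then (1 : ℝ) else 0)
                - p ^ 2) else 0)
            + ((Finset.univ.filter fun z : L × U => Adj z.1 z.2).card : ℝ)) := by
  classical
  set n : ℝ := (Fintype.card L : ℝ) with hn
  set m : ℝ := (Fintype.card U : ℝ) with hm
  set g : U → ℝ := fun u => ∑ v : L, if Adj v u then (1:ℝ) else 0 with hg
  have hn0 : (0:ℝ) ≤ n := by positivity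
  have hm0 : (0:ℝ) ≤ m := by positivity
  have hE : ((Finset.univ.filter fun z : L × U => Adj z.1 z.2).card : ℝ) = ∑ u : U, g u := by
    rw [Finset.card_filter]
    push_cast
    rw [Fintype.sum_prod_type]
    exact Finset.sum_comm
  have hER : ((((Finset.univ ×ˢ R).filter fun z : L × U => Adj z.1 z.2).card : ℝ))
      = ∑ u ∈ R, g u := by
    rw [Finset.card_filter]
    push_cast
    rw [Finset.sum_product]
    exact Finset.sum_comm
  -- inner sum computation
  have key : ∀ u : U, (∑ v₁ : L, ∑ v₂ : L, if v₁ ≠ v₂ then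
      ((if Adj v₁ u then (1 : ℝ) else 0) * (if Adj v₂ u then (1 : ℝ) else 0)
        - p ^ 2) else 0) = g u ^ 2 - g u - p ^ 2 * (n ^ 2 - n) := by
    intro u
    have hgu : (∑ v : L, if Adj v u then (1:ℝ) else 0) = g u := rfl
    have h1 : ∀ v₁ : L, (∑ v₂ : L, if v₁ ≠ v₂ then
        ((if Adj v₁ u then (1 : ℝ) else 0) * (if Adj v₂ u then (1 : ℝ) else 0)
          - p ^ 2) else 0)
        = (if Adj v₁ u then (1:ℝ) else 0) * g u - p ^ 2 * n
          - ((if Adj v₁ u then (1:ℝ) else 0) - p ^ 2) := by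
      intro v₁
      have h2 : ∀ v₂ : L, (if v₁ ≠ v₂ then
          ((if Adj v₁ u then (1 : ℝ) else 0) * (if Adj v₂ u then (1 : ℝ) else 0)
            - p ^ 2) else 0)
          = ((if Adj v₁ u then (1 : ℝ) else 0) * (if Adj v₂ u then (1 : ℝ) else 0) - p ^ 2)
            - (if v₂ = v₁ then
              ((if Adj v₁ u then (1 : ℝ) else 0) * (if Adj v₂ u then (1 : ℝ) else 0) - p ^ 2)
              else 0) := by
        intro v₂
        by_cases h : v₁ = v₂ <;> simp [h, Ne, eq_comm]
      rw [Finset.sum_congr rfl fun v₂ _ => h2 v₂, Finset.sum_sub_distrib,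
        Finset.sum_ite_eq' Finset.univ v₁]
      simp only [Finset.mem_univ, if_true]
      have hin : (∑ v₂ : L, ((if Adj v₁ u then (1 : ℝ) else 0) * (if Adj v₂ u then (1 : ℝ) else 0)
          - p ^ 2)) = (if Adj v₁ u then (1:ℝ) else 0) * g u - p ^ 2 * n := by
        rw [Finset.sum_sub_distrib, ← Finset.mul_sum, Finset.sum_const, nsmul_eq_mul,
          Finset.card_univ, ← hn, hgu]
        ring
      rw [hin]
      by_cases h : Adj v₁ u <;> simp [h] <;> ring
    rw [Finset.sum_congr rfl fun v₁ _ => h1 v₁]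
    simp only [Finset.sum_sub_distrib, ← Finset.sum_mul, Finset.sum_const, nsmul_eq_mul,
      Finset.card_univ]
    rw [← hn, hgu]
    ring
  have hnpos : 0 < n := by
    by_contra h
    push_neg at h
    have h0 : n = 0 := le_antisymm h hn0
    rw [h0] at hp2
    simp at hp2
    linarith
  have hmpos : 0 < m := by
    by_contra h
    push_neg at h
    have h0 : m = 0 := le_antisymm h hm0
    rw [h0] at hp2
    simp at hp2
    linarith
  have hEdge : p * n * m ≤ ∑ u : U, g u := by
    rw [← hE]
    have := mul_le_mul_of_nonneg_right hp2 (le_of_lt (mul_pos hnpos hmpos))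
    calc p * n * m = p * (n * m) := by ring
    _ ≤ (n⁻¹ * m⁻¹ * _) * (n * m) := this
    _ = _ := by field_simp
  rw [hER, hE]
  have cs : (∑ u ∈ R, (g u - p * n)) ^ 2 ≤ (R.card : ℝ) * ∑ u ∈ R, (g u - p * n) ^ 2 := by
    have := sq_sum_le_card_mul_sum_sq (s := R) (f := fun u => g u - p * n)
    exact_mod_cast this
  have sub1 : (∑ u ∈ R, g u) - p * n * R.card = ∑ u ∈ R, (g u - p * n) := by
    rw [Finset.sum_sub_distrib, Finset.sum_const, nsmul_eq_mul]; ring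
  have ext1 : ∑ u ∈ R, (g u - p * n) ^ 2 ≤ ∑ u : U, (g u - p * n) ^ 2 :=
    Finset.sum_le_sum_of_subset_of_nonneg (Finset.subset_univ R) (fun u _ _ => sq_nonneg _)
  have main : ∑ u : U, (g u - p * n) ^ 2
      ≤ (∑ u : U, (g u ^ 2 - g u - p ^ 2 * (n ^ 2 - n))) + ∑ u : U, g u := by
    have e1 : ∀ u : U, (g u - p * n) ^ 2 = g u ^ 2 - 2 * p * n * g u + p ^ 2 * n ^ 2 :=
      fun u => by ring
    have expand : ∑ u : U, (g u - p * n) ^ 2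
        = (∑ u : U, g u ^ 2) - 2 * p * n * (∑ u : U, g u) + p ^ 2 * n ^ 2 * m := by
      rw [Finset.sum_congr rfl fun u _ => e1 u, Finset.sum_add_distrib,
        Finset.sum_sub_distrib, ← Finset.mul_sum, Finset.sum_const, nsmul_eq_mul,
        Finset.card_univ, ← hm]
      ring
    have expand2 : (∑ u : U, (g u ^ 2 - g u - p ^ 2 * (n ^ 2 - n))) + ∑ u : U, g u
        = (∑ u : U, g u ^ 2) - p ^ 2 * (n ^ 2 - n) * m := by
      rw [Finset.sum_sub_distrib, Finset.sum_sub_distrib, Finset.sum_const, nsmul_eq_mul,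
        Finset.card_univ, ← hm]
      ring
    rw [expand, expand2]
    have h1 : 2 * p * n * (p * n * m) ≤ 2 * p * n * (∑ u : U, g u) :=
      mul_le_mul_of_nonneg_left hEdge (by positivity)
    have h2 : (0:ℝ) ≤ p ^ 2 * n * m := by positivity
    nlinarith [h1, h2]
  calc ((∑ u ∈ R, g u) - p * n * R.card) ^ 2 = (∑ u ∈ R, (g u - p * n)) ^ 2 := by rw [sub1]
    _ ≤ (R.card : ℝ) * ∑ u ∈ R, (g u - p * n) ^ 2 := cs
    _ ≤ (R.card : ℝ) * ∑ u : U, (g u - p * n) ^ 2 :=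
        mul_le_mul_of_nonneg_left ext1 (by positivity)
    _ ≤ (R.card : ℝ) * ((∑ u : U, (g u ^ 2 - g u - p ^ 2 * (n ^ 2 - n))) + ∑ u : U, g u) :=
        mul_le_mul_of_nonneg_left main (by positivity)
    _ = _ := by rw [Finset.sum_congr rfl fun u _ => (key u).symm]
end

section
/- Let d ≥ 1, let q be an odd prime power, and let Q be a nondegenerate quadratic form on F_q^d. Let P ⊆ F_q^d and let S be a set of Q-spheres (with arbitrary radii). Then |I(P,S) − q^{−1}|P||S|| ≤ √(q^{d}|P||S|). -/
open Finset

private lemma fiber_card_mul {F : Type*} [Field F] [Fintype F] [DecidableEq F]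
    {V : Type*} [AddCommGroup V] [Module F V] [Fintype V] [DecidableEq V]
    (φ : V →ₗ[F] F) (hφ : φ ≠ 0) (a : F) :
    (Finset.univ.filter fun c => φ c = a).card * Fintype.card F = Fintype.card V := by
  have hsurj : ∀ b : F, ∃ c, φ c = b := by
    obtain ⟨v, hv⟩ : ∃ v, φ v ≠ 0 := by
      by_contra h; push_neg at h; exact hφ (LinearMap.ext fun v => h v)
    intro b
    exact ⟨(b / φ v) • v, by rw [map_smul, smul_eq_mul, div_mul_cancel₀ _ hv]⟩
  have hcongr : ∀ b : F, (Finset.univ.filter fun c => φ c = b).card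
      = (Finset.univ.filter fun c => φ c = a).card := by
    intro b
    obtain ⟨ca, hca⟩ := hsurj a
    obtain ⟨cb, hcb⟩ := hsurj b
    apply Finset.card_bij' (fun c _ => c - cb + ca) (fun c _ => c - ca + cb)
    · intro c hc
      simp only [Finset.mem_filter, Finset.mem_univ, true_and] at hc ⊢
      simp [map_add, map_sub, hc, hca, hcb]
    · intro c hc
      simp only [Finset.mem_filter, Finset.mem_univ, true_and] at hc ⊢
      simp [map_add, map_sub, hc, hca, hcb]
    · intro c _; abel
    · intro c _; abel
  have hpart : Fintype.card V = ∑ b : F, (Finset.univ.filter fun c => φ c = b).card := by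
    rw [← Finset.card_univ]
    exact Finset.card_eq_sum_card_fiberwise (fun x _ => Finset.mem_univ (φ x))
  rw [hpart, Finset.sum_congr rfl fun b _ => hcongr b, Finset.sum_const, Finset.card_univ,
    smul_eq_mul, mul_comm]


private lemma row_orth {F : Type*} [Field F] [Fintype F] [DecidableEq F] {d : ℕ}
    (Q : QuadraticForm F (Fin d → F))
    (hQ : LinearMap.BilinForm.Nondegenerate Q.polarBilin) (x y : Fin d → F) :
    ∑ s : (Fin d → F) × F,
      ((if Q (x - s.1) = s.2 then (1:ℝ) else 0) - (Fintype.card F : ℝ)⁻¹) *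
      ((if Q (y - s.1) = s.2 then (1:ℝ) else 0) - (Fintype.card F : ℝ)⁻¹)
    = if x = y then (Fintype.card F : ℝ)^d - (Fintype.card F : ℝ)^d * (Fintype.card F : ℝ)⁻¹
      else 0 := by
  have hq0 : (0:ℝ) < (Fintype.card F : ℝ) := by
    exact_mod_cast Fintype.card_pos
  set qi : ℝ := (Fintype.card F : ℝ)⁻¹ with hqi
  rw [Fintype.sum_prod_type]
  have inner : ∀ c : Fin d → F, (∑ r : F,
      ((if Q (x - c) = r then (1:ℝ) else 0) - qi) * ((if Q (y - c) = r then (1:ℝ) else 0) - qi))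
      = (if Q (x - c) = Q (y - c) then (1:ℝ) else 0) - qi := by
    intro c
    have expand : ∀ r : F,
        ((if Q (x - c) = r then (1:ℝ) else 0) - qi) * ((if Q (y - c) = r then (1:ℝ) else 0) - qi)
        = (if Q (x - c) = r ∧ Q (y - c) = r then (1:ℝ) else 0)
          - qi * (if Q (x - c) = r then (1:ℝ) else 0)
          - qi * (if Q (y - c) = r then (1:ℝ) else 0) + qi^2 := by
      intro r
      by_cases h1 : Q (x - c) = r <;> by_cases h2 : Q (y - c) = r <;>
        simp [h1, h2] <;> ring
    rw [Finset.sum_congr rfl fun r _ => expand r]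
    have s1 : ∑ r : F, (if Q (x - c) = r ∧ Q (y - c) = r then (1:ℝ) else 0)
        = if Q (x - c) = Q (y - c) then (1:ℝ) else 0 := by
      by_cases h : Q (x - c) = Q (y - c)
      · rw [if_pos h, h]
        simp
      · rw [if_neg h]
        apply Finset.sum_eq_zero
        intro r _
        rw [if_neg]
        rintro ⟨h1, h2⟩
        exact h (h1.trans h2.symm)
    have s2 : ∑ r : F, qi * (if Q (x - c) = r then (1:ℝ) else 0) = qi := by
      rw [← Finset.mul_sum]; simp
    have s3 : ∑ r : F, qi * (if Q (y - c) = r then (1:ℝ) else 0) = qi := by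
      rw [← Finset.mul_sum]; simp
    have s4 : ∑ _r : F, qi^2 = (Fintype.card F : ℝ) * qi ^ 2 := by
      simp [Finset.sum_const, Finset.card_univ, mul_comm]
    simp only [Finset.sum_add_distrib, Finset.sum_sub_distrib, s1, s2, s3, s4]
    have : (Fintype.card F : ℝ) * qi ^ 2 = qi := by
      rw [hqi]; field_simp
    rw [this]; ring
  rw [Finset.sum_congr rfl fun c _ => inner c, Finset.sum_sub_distrib]
  have sc : ∑ _c : Fin d → F, qi = (Fintype.card F : ℝ)^d * qi := by
    simp [Finset.sum_const, Finset.card_univ, Fintype.card_fun, mul_comm]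
  rw [sc]
  have hcnt : ∑ c : Fin d → F, (if Q (x - c) = Q (y - c) then (1:ℝ) else 0)
      = ((Finset.univ.filter fun c => Q (x - c) = Q (y - c)).card : ℝ) := by
    rw [Finset.card_filter]
    push_cast
    rfl
  rw [hcnt]
  by_cases hxy : x = y
  · subst hxy
    rw [if_pos rfl]
    have : (Finset.univ.filter fun c : Fin d → F => Q (x - c) = Q (x - c)) = Finset.univ := by
      simp
    rw [this]
    simp [Finset.card_univ, Fintype.card_fun]
  · rw [if_neg hxy]
    -- rewrite the condition as a linear equation
    set w : Fin d → F := x - y with hw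
    have hwne : w ≠ 0 := sub_ne_zero.mpr hxy
    set φ : (Fin d → F) →ₗ[F] F := Q.polarBilin w with hφdef
    have hφ : φ ≠ 0 := by
      intro h
      apply hwne
      apply hQ.1
      intro n
      rw [← hφdef, h]
      rfl
    have hcond : ∀ c : Fin d → F, (Q (x - c) = Q (y - c)) ↔ (φ c = Q w + φ y) := by
      intro c
      have hsplit : x - c = (y - c) + w := by rw [hw]; abel
      have : Q (x - c) = Q (y - c) + Q w + QuadraticMap.polar Q (y - c) w := by
        rw [hsplit, QuadraticMap.map_add (⇑Q) (y - c) w]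
      rw [this]
      have hpol : QuadraticMap.polar Q (y - c) w = φ y - φ c := by
        rw [hφdef]
        simp only [QuadraticMap.polarBilin_apply_apply]
        rw [QuadraticMap.polar_comm]
        rw [QuadraticMap.polar_sub_right]
      rw [hpol]
      constructor
      · intro h
        linear_combination -h
      · intro h
        linear_combination -h
    have hfilter : (Finset.univ.filter fun c => Q (x - c) = Q (y - c))
        = Finset.univ.filter fun c => φ c = Q w + φ y :=
      Finset.filter_congr fun c _ => hcond c
    rw [hfilter]
    have hcard := fiber_card_mul φ hφ (Q w + φ y)
    have hV : Fintype.card (Fin d → F) = Fintype.card F ^ d := by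
      simp [Fintype.card_fun]
    rw [hV] at hcard
    have hcardR : ((Finset.univ.filter fun c => φ c = Q w + φ y).card : ℝ)
        * (Fintype.card F : ℝ) = (Fintype.card F : ℝ) ^ d := by
      exact_mod_cast congrArg (Nat.cast : ℕ → ℝ) hcard
    rw [hqi]
    field_simp
    linarith [hcardR]

/-- Incidence bound for spheres of an arbitrary nondegenerate quadratic form. -/
theorem stmt8 {F : Type*} [Field F] [Fintype F] [DecidableEq F]
    (hq : Odd (Fintype.card F)) {d : ℕ} (hd : 1 ≤ d)
    (Q : QuadraticForm F (Fin d → F))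
    (hQ : LinearMap.BilinForm.Nondegenerate Q.polarBilin)
    (P : Finset (Fin d → F)) (S : Finset ((Fin d → F) × F)) :
    |(sphIncid (fun x => Q x) P S : ℝ) - (Fintype.card F : ℝ)⁻¹ * P.card * S.card|
      ≤ Real.sqrt ((Fintype.card F : ℝ) ^ d * P.card * S.card) := by
  classical
  have hq1 : (1:ℝ) ≤ (Fintype.card F : ℝ) := by exact_mod_cast Fintype.card_pos
  set m : (Fin d → F) → ((Fin d → F) × F) → ℝ :=
    fun x s => (if Q (x - s.1) = s.2 then 1 else 0) - (Fintype.card F : ℝ)⁻¹ with hm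
  set g : ((Fin d → F) × F) → ℝ := fun s => ∑ x ∈ P, m x s with hg
  set lam : ℝ := (Fintype.card F : ℝ)^d - (Fintype.card F : ℝ)^d * (Fintype.card F : ℝ)⁻¹
    with hlam
  have hlam0 : 0 ≤ lam := by
    rw [hlam]
    have : (Fintype.card F : ℝ)⁻¹ ≤ 1 := by
      rw [inv_le_one_iff₀]; right; exact hq1
    nlinarith [pow_pos (lt_of_lt_of_le one_pos hq1) d]
  have hlam_le : lam ≤ (Fintype.card F : ℝ)^d := by
    rw [hlam]
    have h1 : 0 < (Fintype.card F : ℝ) := lt_of_lt_of_le one_pos hq1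
    have : 0 ≤ (Fintype.card F : ℝ)^d * (Fintype.card F : ℝ)⁻¹ := by positivity
    linarith
  have hE : (sphIncid (fun x => Q x) P S : ℝ)
      - (Fintype.card F : ℝ)⁻¹ * P.card * S.card = ∑ s ∈ S, g s := by
    have h1 : (sphIncid (fun x => Q x) P S : ℝ)
        = ∑ z ∈ P ×ˢ S, (if Q (z.1 - z.2.1) = z.2.2 then (1:ℝ) else 0) := by
      rw [sphIncid, Finset.card_filter]
      push_cast
      rfl
    have h2 : ∑ s ∈ S, g s = ∑ z ∈ P ×ˢ S, m z.1 z.2 := by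
      rw [hg, Finset.sum_comm, Finset.sum_product]
    rw [h1, h2]
    simp only [hm, Finset.sum_sub_distrib, Finset.sum_const, Finset.card_product]
    push_cast
    ring
  rw [hE]
  have hsum : ∑ s : (Fin d → F) × F, g s ^ 2 = P.card * lam := by
    have hsq : ∀ s, g s ^ 2 = ∑ x ∈ P, ∑ y ∈ P, m x s * m y s := by
      intro s; rw [hg, sq, Finset.sum_mul_sum]
    rw [Finset.sum_congr rfl fun s _ => hsq s, Finset.sum_comm]
    have hx : ∀ x ∈ P, (∑ s : (Fin d → F) × F, ∑ y ∈ P, m x s * m y s) = lam := by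
      intro x hxP
      rw [Finset.sum_comm]
      have hy : ∀ y, (∑ s : (Fin d → F) × F, m x s * m y s)
          = if x = y then lam else 0 := fun y => row_orth Q hQ x y
      rw [Finset.sum_congr rfl fun y _ => hy y, Finset.sum_ite_eq, if_pos hxP]
    rw [Finset.sum_congr rfl hx, Finset.sum_const, nsmul_eq_mul]
  have cs := Finset.sum_mul_sq_le_sq_mul_sq S (fun _ => (1:ℝ)) g
  simp only [one_mul, one_pow, Finset.sum_const, nsmul_eq_mul, mul_one] at cs
  have hle : ∑ s ∈ S, g s ^ 2 ≤ ∑ s : (Fin d → F) × F, g s ^ 2 :=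
    Finset.sum_le_sum_of_subset_of_nonneg (Finset.subset_univ S) (fun s _ _ => sq_nonneg _)
  apply Real.abs_le_sqrt
  calc (∑ s ∈ S, g s)^2 ≤ (S.card : ℝ) * ∑ s ∈ S, g s ^ 2 := cs
    _ ≤ (S.card : ℝ) * ((P.card : ℝ) * lam) := by
        apply mul_le_mul_of_nonneg_left _ (Nat.cast_nonneg _)
        rw [← hsum]; exact hle
    _ ≤ (S.card : ℝ) * ((P.card : ℝ) * (Fintype.card F : ℝ)^d) := by
        apply mul_le_mul_of_nonneg_left _ (Nat.cast_nonneg _)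
        exact mul_le_mul_of_nonneg_left hlam_le (Nat.cast_nonneg _)
    _ = (Fintype.card F : ℝ)^d * P.card * S.card := by ring
end

section
/- Let d ≥ 1, let q be an odd prime power, and let Q be a nondegenerate quadratic form on F_q^d. Let P ⊆ F_q^d, let N be an integer, and let S be a set of Q-spheres such that every sphere s ∈ S contains exactly q^{d−1} + N points of F_q^d. Let p = q^{−1} + q^{−d}N. Then (I(P,S) − p|P||S|)² ≤ |P| · Σ_{(s₁,s₂) ∈ S×S, s₁ ≠ s₂} (|s₁ ∩ s₂| − q^{d}p²) + |P||S|(q^{d−1} + N), where the sum ranges over ordered pairs of distinct spheres of S and |s₁ ∩ s₂| denotes the number of points in the intersection of the two spheres. -/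
open Finset

/-- The general weighted incidence bound, in terms of pairwise intersections of
spheres, for spheres that all contain exactly `q^{d−1} + N` points. -/
theorem stmt9 {F : Type*} [Field F] [Fintype F] [DecidableEq F]
    (hq : Odd (Fintype.card F)) {d : ℕ} (hd : 1 ≤ d)
    (Q : QuadraticForm F (Fin d → F))
    (hQ : LinearMap.BilinForm.Nondegenerate Q.polarBilin)
    (P : Finset (Fin d → F)) (S : Finset ((Fin d → F) × F))
    (N : ℤ)
    (hcard : ∀ s ∈ S, ((spherePts (fun x => Q x) s).card : ℤ)
      = (Fintype.card F : ℤ) ^ (d-1) + N)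
    (p : ℝ)
    (hp : p = (Fintype.card F : ℝ)⁻¹ + ((Fintype.card F : ℝ) ^ d)⁻¹ * N) :
    ((sphIncid (fun x => Q x) P S : ℝ) - p * P.card * S.card) ^ 2
      ≤ (P.card : ℝ) * (∑ s₁ ∈ S, ∑ s₂ ∈ S, if s₁ ≠ s₂ then
            (((spherePts (fun x => Q x) s₁ ∩ spherePts (fun x => Q x) s₂).card : ℝ)
              - (Fintype.card F : ℝ) ^ d * p ^ 2) else 0)
        + (P.card : ℝ) * S.card * ((Fintype.card F : ℝ) ^ (d-1) + N) := by
  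
  classical
  set q : ℝ := (Fintype.card F : ℝ) with hqdef
  have hq0 : (0:ℝ) < q := by rw [hqdef]; exact_mod_cast (Fintype.card_pos (α := F))
  have hqne : q ≠ 0 := ne_of_gt hq0
  set Qf : (Fin d → F) → F := fun x => Q x with hQfdef
  set A : ((Fin d → F) × F) → Finset (Fin d → F) := fun s => spherePts Qf s with hAdef
  set χ : ((Fin d → F) × F) → (Fin d → F) → ℝ :=
    fun s x => if x ∈ A s then 1 else 0 with hχdef
  set f : (Fin d → F) → ℝ := fun x => ∑ s ∈ S, (χ s x - p) with hfdef
  obtain ⟨e, rfl⟩ : ∃ e, d = e + 1 := ⟨d - 1, by omega⟩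
  have hde : (e + 1) - 1 = e := by omega
  -- basic counting identities
  have hcardtot : (Fintype.card (Fin (e+1) → F) : ℝ) = q ^ (e+1) := by
    simp [Fintype.card_fun, hqdef]
  have hsum1 : ∀ B : Finset (Fin (e+1) → F),
      (∑ x : Fin (e+1) → F, (if x ∈ B then (1:ℝ) else 0)) = B.card := by
    intro B; simp [Finset.sum_ite_mem]
  have hpq : p * q ^ (e+1) = q ^ e + (N:ℝ) := by
    rw [hp]; rw [hqdef] at hqne ⊢; field_simp; ring
  have hsize : ∀ s ∈ S, (∑ x : Fin (e+1) → F, χ s x) = p * q ^ (e+1) := by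
    intro s hs
    rw [hpq]
    have := hcard s hs
    rw [hde] at this
    have h1 : ((A s).card : ℝ) = q ^ e + (N:ℝ) := by rw [hqdef]; exact_mod_cast this
    rw [hχdef, hsum1, h1]
  -- incidence count as a sum
  have hI : (sphIncid Qf P S : ℝ) = ∑ x ∈ P, ∑ s ∈ S, χ s x := by
    unfold sphIncid
    rw [Finset.card_filter]
    push_cast
    rw [Finset.sum_product]
    refine Finset.sum_congr rfl fun x _ => Finset.sum_congr rfl fun s _ => ?_
    simp [hχdef, hAdef, spherePts]
  have hLHS : (sphIncid Qf P S : ℝ) - p * P.card * S.card = ∑ x ∈ P, f x := by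
    rw [hI, hfdef]
    simp only [Finset.sum_sub_distrib, Finset.sum_const, nsmul_eq_mul]
    ring
  -- Cauchy-Schwarz
  have hCS : (∑ x ∈ P, f x) ^ 2 ≤ (P.card : ℝ) * ∑ x ∈ P, (f x) ^ 2 := by
    have := Finset.sum_mul_sq_le_sq_mul_sq P (fun _ => (1:ℝ)) f
    simpa using this
  have hPle : ∑ x ∈ P, (f x) ^ 2 ≤ ∑ x : Fin (e+1) → F, (f x) ^ 2 :=
    Finset.sum_le_sum_of_subset_of_nonneg (Finset.subset_univ P)
      (fun x _ _ => sq_nonneg _)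
  -- expand the full second moment
  have hcross : ∀ s₁ s₂,
      (∑ x : Fin (e+1) → F, χ s₁ x * χ s₂ x) = ((A s₁ ∩ A s₂).card : ℝ) := by
    intro s₁ s₂
    rw [← hsum1 (A s₁ ∩ A s₂)]
    refine Finset.sum_congr rfl fun x _ => ?_
    simp only [hχdef, Finset.mem_inter]
    by_cases h1 : x ∈ A s₁ <;> by_cases h2 : x ∈ A s₂ <;> simp [h1, h2]
  have hexp : ∑ x : Fin (e+1) → F, (f x) ^ 2
      = ∑ s₁ ∈ S, ∑ s₂ ∈ S, (((A s₁ ∩ A s₂).card : ℝ) - q ^ (e+1) * p ^ 2) := by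
    simp only [hfdef, sq, Finset.sum_mul_sum]
    rw [Finset.sum_comm]
    refine Finset.sum_congr rfl fun s₁ h₁ => ?_
    rw [Finset.sum_comm]
    refine Finset.sum_congr rfl fun s₂ h₂ => ?_
    have : ∀ x, (χ s₁ x - p) * (χ s₂ x - p)
        = χ s₁ x * χ s₂ x - p * χ s₁ x - p * χ s₂ x + p * p := by intro x; ring
    simp only [this]
    rw [Finset.sum_add_distrib, Finset.sum_sub_distrib, Finset.sum_sub_distrib,
      hcross, ← Finset.mul_sum, ← Finset.mul_sum, hsize s₁ h₁, hsize s₂ h₂,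
      Finset.sum_const, Finset.card_univ, nsmul_eq_mul, hcardtot]
    ring
  -- split into off-diagonal and diagonal
  have hsplit : ∑ s₁ ∈ S, ∑ s₂ ∈ S, (((A s₁ ∩ A s₂).card : ℝ) - q ^ (e+1) * p ^ 2)
      = (∑ s₁ ∈ S, ∑ s₂ ∈ S, if s₁ ≠ s₂ then
          (((A s₁ ∩ A s₂).card : ℝ) - q ^ (e+1) * p ^ 2) else 0)
        + ∑ s ∈ S, (((A s).card : ℝ) - q ^ (e+1) * p ^ 2) := by
    rw [← Finset.sum_add_distrib]
    refine Finset.sum_congr rfl fun s₁ h₁ => ?_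
    have : ∀ s₂, (if s₁ ≠ s₂ then (((A s₁ ∩ A s₂).card : ℝ) - q ^ (e+1) * p ^ 2) else 0)
        = (((A s₁ ∩ A s₂).card : ℝ) - q ^ (e+1) * p ^ 2)
          - (if s₁ = s₂ then (((A s₁ ∩ A s₂).card : ℝ) - q ^ (e+1) * p ^ 2) else 0) := by
      intro s₂; by_cases h : s₁ = s₂ <;> simp [h]
    rw [Finset.sum_sub_distrib]
    simp only [this]
    rw [Finset.sum_sub_distrib, Finset.sum_ite_eq S s₁, if_pos h₁]
    simp [Finset.inter_self]
  have hdiag : ∑ s ∈ S, (((A s).card : ℝ) - q ^ (e+1) * p ^ 2)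
      ≤ (S.card : ℝ) * (q ^ e + (N:ℝ)) := by
    calc ∑ s ∈ S, (((A s).card : ℝ) - q ^ (e+1) * p ^ 2)
        ≤ ∑ s ∈ S, (q ^ e + (N:ℝ)) := by
          refine Finset.sum_le_sum fun s hs => ?_
          have h1 : ((A s).card : ℝ) = q ^ e + (N:ℝ) := by
            have := hcard s hs; rw [hde] at this; rw [hqdef]; exact_mod_cast this
          have h2 : (0:ℝ) ≤ q ^ (e+1) * p ^ 2 :=
            mul_nonneg (pow_nonneg hq0.le _) (sq_nonneg _)
          linarith
      _ = (S.card : ℝ) * (q ^ e + (N:ℝ)) := by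
          rw [Finset.sum_const, nsmul_eq_mul]
  -- combine
  have hPnn : (0:ℝ) ≤ (P.card : ℝ) := Nat.cast_nonneg _
  rw [hde]
  calc ((sphIncid Qf P S : ℝ) - p * P.card * S.card) ^ 2
      = (∑ x ∈ P, f x) ^ 2 := by rw [hLHS]
    _ ≤ (P.card : ℝ) * ∑ x ∈ P, (f x) ^ 2 := hCS
    _ ≤ (P.card : ℝ) * ∑ x : Fin (e+1) → F, (f x) ^ 2 := by
        exact mul_le_mul_of_nonneg_left hPle hPnn
    _ = (P.card : ℝ) * ((∑ s₁ ∈ S, ∑ s₂ ∈ S, if s₁ ≠ s₂ then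
          (((A s₁ ∩ A s₂).card : ℝ) - q ^ (e+1) * p ^ 2) else 0)
        + ∑ s ∈ S, (((A s).card : ℝ) - q ^ (e+1) * p ^ 2)) := by
        rw [hexp, hsplit]
    _ ≤ (P.card : ℝ) * ((∑ s₁ ∈ S, ∑ s₂ ∈ S, if s₁ ≠ s₂ then
          (((A s₁ ∩ A s₂).card : ℝ) - q ^ (e+1) * p ^ 2) else 0)
        + (S.card : ℝ) * (q ^ e + (N:ℝ))) := by
        exact mul_le_mul_of_nonneg_left (by linarith [hdiag]) hPnn
    _ = (P.card : ℝ) * (∑ s₁ ∈ S, ∑ s₂ ∈ S, if s₁ ≠ s₂ then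
          (((A s₁ ∩ A s₂).card : ℝ) - q ^ (e+1) * p ^ 2) else 0)
        + (P.card : ℝ) * S.card * (q ^ e + (N:ℝ)) := by ring
end

section
/- Let d ≥ 1, let q be an odd prime power, let Q be a nondegenerate quadratic form on F_q^d, and let C ⊆ F_q^d. Then | Σ_{(x,y) ∈ C×C} η(Q(x−y)) | ≤ √2 · q^{(d+1)/2} · |C|. -/
open Finset

open AddChar Matrix

set_option maxHeartbeats 2000000

private lemma auxSumZero {G : Type*} [AddCommGroup G] [Fintype G] (φ : G → ℂ)
    (h0 : φ 0 = 1) (hadd : ∀ a b, φ (a + b) = φ a * φ b) (hnt : ∃ a, φ a ≠ 1) :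
    ∑ a, φ a = 0 := by
  have h : (AddChar.mk φ h0 hadd : AddChar G ℂ) ≠ 1 := by
    rw [AddChar.ne_one_iff]
    exact hnt
  simpa using AddChar.sum_eq_zero_of_ne_one h

private lemma auxWeil {F : Type*} [Field F] [Fintype F]
    {V : Type*} [AddCommGroup V] [Fintype V] (ψ : AddChar F ℂ)
    (hchar : 0 < ringChar F) (f : V → F) (B : V → V → F)
    (hf : ∀ v h, f (v + h) = f v + f h + B v h)
    (hBadd : ∀ h v v', B (v + v') h = B v h + B v' h)
    (hBnt : ∀ h, h ≠ 0 → ∃ v, ψ (B v h) ≠ 1) :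
    ‖∑ u, ψ (f u)‖ = Real.sqrt (Fintype.card V) := by
  have hconj : ∀ x : F, (starRingEnd ℂ) (ψ x) = ψ (-x) := fun x => by
    rw [AddChar.starComp_apply hchar, AddChar.inv_apply]
  have hB0 : ∀ h, B 0 h = 0 := by
    intro h
    have h1 : B 0 h = B 0 h + B 0 h := by simpa using hBadd h 0 0
    exact left_eq_add.mp h1
  have hf0 : f 0 = 0 := by
    have h1 : f 0 = f 0 + f 0 := by simpa [hB0] using hf 0 0
    exact left_eq_add.mp h1
  have hBv0 : ∀ v, B v 0 = 0 := by
    intro v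
    have h1 : f v = f v + B v 0 := by simpa [hf0] using hf v 0
    exact left_eq_add.mp h1
  have key : (∑ u, ψ (f u)) * (starRingEnd ℂ) (∑ u, ψ (f u)) = (Fintype.card V : ℂ) := by
    rw [map_sum, Finset.sum_mul_sum]
    have step1 : ∀ v : V, ∑ u, ψ (f u) * (starRingEnd ℂ) (ψ (f v))
        = ∑ h, ψ (f h) * ψ (B v h) := by
      intro v
      rw [← Equiv.sum_comp (Equiv.addLeft v)
        (fun u => ψ (f u) * (starRingEnd ℂ) (ψ (f v)))]
      refine Finset.sum_congr rfl fun h _ => ?_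
      simp only [Equiv.coe_addLeft]
      have harg : f (v + h) + -(f v) = f h + B v h := by rw [hf]; ring
      rw [hconj, ← AddChar.map_add_eq_mul, harg, AddChar.map_add_eq_mul]
    calc ∑ u, ∑ v, ψ (f u) * (starRingEnd ℂ) (ψ (f v))
        = ∑ v, ∑ u, ψ (f u) * (starRingEnd ℂ) (ψ (f v)) := Finset.sum_comm
      _ = ∑ v, ∑ h, ψ (f h) * ψ (B v h) := Finset.sum_congr rfl fun v _ => step1 v
      _ = ∑ h, ∑ v, ψ (f h) * ψ (B v h) := Finset.sum_comm
      _ = ∑ h, ψ (f h) * ∑ v, ψ (B v h) := by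
          refine Finset.sum_congr rfl fun h _ => ?_
          rw [Finset.mul_sum]
      _ = (Fintype.card V : ℂ) := by
          rw [Finset.sum_eq_single 0]
          · simp [hBv0, hf0, Finset.card_univ]
          · intro h _ hne
            have hz : ∑ v, ψ (B v h) = 0 :=
              auxSumZero (fun v => ψ (B v h)) (by simp [hB0])
                (fun a b => by rw [hBadd, AddChar.map_add_eq_mul]) (hBnt h hne)
            rw [hz, mul_zero]
          · intro h; exact absurd (Finset.mem_univ 0) h
  have hnormsq : Complex.normSq (∑ u, ψ (f u)) = Fintype.card V := by
    have h := key
    rw [Complex.mul_conj] at h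
    exact_mod_cast h
  rw [Complex.norm_def, hnormsq]

/-- Cancellation in the sum of the quadratic character of pairwise `Q`-distances. -/
theorem stmt10 {F : Type*} [Field F] [Fintype F] [DecidableEq F]
    (hq : Odd (Fintype.card F)) {d : ℕ} (hd : 1 ≤ d)
    (Q : QuadraticForm F (Fin d → F))
    (hQ : LinearMap.BilinForm.Nondegenerate Q.polarBilin)
    (C : Finset (Fin d → F)) :
    |∑ x ∈ C, ∑ y ∈ C, (quadraticChar F (Q (x - y)) : ℝ)|
      ≤ Real.sqrt 2 * (Fintype.card F : ℝ) ^ (((d : ℝ) + 1)/2) * C.card := by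
  classical
  have hq2 : ringChar F ≠ 2 := by
    intro h
    have h2 := FiniteField.even_card_of_char_two h
    rw [Nat.odd_iff] at hq
    omega
  have h2F : (2 : F) ≠ 0 := Ring.two_ne_zero hq2
  have hchar : 0 < ringChar F :=
    Nat.pos_of_ne_zero (CharP.ringChar_ne_zero_of_finite F)
  set ψ := FiniteField.primitiveChar_to_Complex F with hψdef
  have hψ : ψ.IsPrimitive := FiniteField.primitiveChar_to_Complex_isPrimitive F
  have hψone : ∃ x : F, ψ x ≠ 1 := by
    have h1 := hψ one_ne_zero
    rw [AddChar.ne_one_iff] at h1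
    obtain ⟨x, hx⟩ := h1
    exact ⟨x, by simpa [AddChar.mulShift_apply] using hx⟩
  have hconj : ∀ x : F, (starRingEnd ℂ) (ψ x) = ψ (-x) := fun x => by
    rw [AddChar.starComp_apply hchar, AddChar.inv_apply]
  have hq0 : 0 < Fintype.card F := Fintype.card_pos
  have hsumF : ∀ b : F, ∑ t : F, ψ (t * b) = if b = 0 then (Fintype.card F : ℂ) else 0 := by
    intro b
    rw [AddChar.sum_mulShift b hψ]
    split_ifs <;> simp
  have hsumV : ∀ w : Fin d → F, ∑ ξ : Fin d → F, ψ (ξ ⬝ᵥ w)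
      = if w = 0 then ((Fintype.card F : ℂ) ^ d) else 0 := by
    intro w
    by_cases hw : w = 0
    · rw [if_pos hw, hw]
      simp only [dotProduct_zero, AddChar.map_zero_eq_one]
      rw [Finset.sum_const, Finset.card_univ, nsmul_eq_mul, mul_one]
      rw [Fintype.card_fun, Fintype.card_fin]
      push_cast
      ring
    · rw [if_neg hw]
      refine auxSumZero (fun ξ => ψ (ξ ⬝ᵥ w)) (by simp)
        (fun a b => by rw [add_dotProduct, AddChar.map_add_eq_mul]) ?_
      obtain ⟨i, hi⟩ := Function.ne_iff.mp hw
      obtain ⟨x0, hx0⟩ := hψone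
      refine ⟨Pi.single i (x0 * (w i)⁻¹), ?_⟩
      simp only [single_dotProduct]
      rw [mul_assoc, inv_mul_cancel₀ (by simpa using hi), mul_one]
      exact hx0
  have hcount : ∀ a : F, ((quadraticChar F a : ℤ) : ℂ)
      = (∑ t : F, if t ^ 2 = a then (1:ℂ) else 0) - 1 := by
    intro a
    have h := quadraticChar_card_sqrts hq2 a
    have hset : {x : F | x ^ 2 = a}.toFinset = Finset.univ.filter (fun x => x ^ 2 = a) := by
      ext x; simp
    rw [hset] at h
    have h' : ((Finset.univ.filter (fun x : F => x ^ 2 = a)).card : ℤ) - 1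
        = (quadraticChar F a : ℤ) := by omega
    calc ((quadraticChar F a : ℤ) : ℂ)
        = ((Finset.univ.filter (fun x : F => x ^ 2 = a)).card : ℂ) - 1 := by
          rw [← h']; push_cast; ring
      _ = (∑ t : F, if t ^ 2 = a then (1:ℂ) else 0) - 1 := by rw [Finset.sum_boole]
  -- one-dimensional Weil (Gauss-type) sum
  have hWeilG : ∀ s : F, s ≠ 0 → ‖∑ t : F, ψ (-(s * t ^ 2))‖ = Real.sqrt (Fintype.card F) := by
    intro s hs
    have h := auxWeil (V := F) ψ hchar (fun t => -(s * t ^ 2))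
      (fun v h => -(2 * s * v * h)) (fun v h => by ring)
      (fun h v v' => by ring) ?_
    · exact h
    · intro h hne
      obtain ⟨x0, hx0⟩ := hψone
      have hc : -(2 * s * h) ≠ 0 := by
        simp only [neg_ne_zero]
        exact mul_ne_zero (mul_ne_zero h2F hs) hne
      refine ⟨x0 * (-(2 * s * h))⁻¹, ?_⟩
      have harg : -(2 * s * (x0 * (-(2 * s * h))⁻¹) * h)
          = x0 * ((-(2 * s * h))⁻¹ * -(2 * s * h)) := by ring
      rw [harg, inv_mul_cancel₀ hc, mul_one]
      exact hx0
  -- d-dimensional Weil sum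
  have hWeilQ : ∀ s : F, s ≠ 0 → ∀ ζ : Fin d → F,
      ‖∑ u : Fin d → F, ψ (s * Q u + ζ ⬝ᵥ u)‖ = Real.sqrt ((Fintype.card F : ℝ) ^ d) := by
    intro s hs ζ
    have h := auxWeil (V := Fin d → F) ψ hchar (fun u => s * Q u + ζ ⬝ᵥ u)
      (fun v h => s * QuadraticMap.polar Q v h) ?_ ?_ ?_
    · rw [h]
      congr 1
      rw [Fintype.card_fun, Fintype.card_fin]
      push_cast
      ring
    · intro v h
      simp only [dotProduct_add]
      unfold QuadraticMap.polar
      ring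
    · intro h v v'
      simp only [QuadraticMap.polar_add_left]
      ring
    · intro h hne
      obtain ⟨w, hw⟩ : ∃ w, Q.polarBilin h w ≠ 0 := by
        by_contra hcon
        push_neg at hcon
        exact hne (hQ.1 h hcon)
      have hw' : QuadraticMap.polar Q w h ≠ 0 := by
        rw [QuadraticMap.polarBilin_apply_apply] at hw
        rwa [QuadraticMap.polar_comm]
      obtain ⟨x0, hx0⟩ := hψone
      have hc : s * QuadraticMap.polar Q w h ≠ 0 := mul_ne_zero hs hw'
      refine ⟨(x0 * (s * QuadraticMap.polar Q w h)⁻¹) • w, ?_⟩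
      simp only [QuadraticMap.polar_smul_left, smul_eq_mul]
      have harg : s * (x0 * (s * QuadraticMap.polar Q w h)⁻¹ * QuadraticMap.polar Q w h)
          = x0 * ((s * QuadraticMap.polar Q w h)⁻¹ * (s * QuadraticMap.polar Q w h)) := by ring
      rw [harg, inv_mul_cancel₀ hc, mul_one]
      exact hx0
  have hcne : (Fintype.card F : ℂ) ≠ 0 := Nat.cast_ne_zero.mpr hq0.ne'
  have hdelta : ∀ a b : F, (if b = a then (1:ℂ) else 0)
      = (Fintype.card F : ℂ)⁻¹ * ∑ s : F, ψ (s * (a - b)) := by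
    intro a b
    rw [hsumF (a - b)]
    by_cases hab : b = a
    · rw [if_pos hab, if_pos (by rw [hab, sub_self])]
      field_simp
    · rw [if_neg hab, if_neg (fun hc => hab (sub_eq_zero.mp hc).symm), mul_zero]
  set fhat : (Fin d → F) → ℂ :=
    fun ξ => ∑ w, ((quadraticChar F (Q w) : ℤ) : ℂ) * ψ (-(ξ ⬝ᵥ w)) with hfhat
  have e1 : ∀ ξ : Fin d → F, fhat ξ = (Fintype.card F : ℂ)⁻¹ *
      ∑ s ∈ Finset.univ \ {(0:F)},
        (∑ t : F, ψ (-(s * t ^ 2))) * (∑ w, ψ (s * Q w + (-ξ) ⬝ᵥ w)) := by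
    intro ξ
    have inner : ∀ s : F, ∑ t : F, ∑ w : Fin d → F, ψ (s * (Q w - t ^ 2)) * ψ (-(ξ ⬝ᵥ w))
        = (∑ t : F, ψ (-(s * t ^ 2))) * (∑ w, ψ (s * Q w + (-ξ) ⬝ᵥ w)) := by
      intro s
      rw [Finset.sum_mul_sum]
      refine Finset.sum_congr rfl fun t _ => Finset.sum_congr rfl fun w _ => ?_
      rw [← AddChar.map_add_eq_mul, ← AddChar.map_add_eq_mul]
      congr 1
      rw [neg_dotProduct]
      ring
    have bigstep : ∑ w, (∑ t : F, if t ^ 2 = Q w then (1:ℂ) else 0) * ψ (-(ξ ⬝ᵥ w))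
        = (Fintype.card F : ℂ)⁻¹ * ∑ s : F,
            (∑ t : F, ψ (-(s * t ^ 2))) * (∑ w, ψ (s * Q w + (-ξ) ⬝ᵥ w)) := by
      calc ∑ w, (∑ t : F, if t ^ 2 = Q w then (1:ℂ) else 0) * ψ (-(ξ ⬝ᵥ w))
          = ∑ w, ∑ t : F, (if t ^ 2 = Q w then (1:ℂ) else 0) * ψ (-(ξ ⬝ᵥ w)) := by
            refine Finset.sum_congr rfl fun w _ => ?_
            rw [Finset.sum_mul]
        _ = ∑ w, ∑ t : F, ((Fintype.card F : ℂ)⁻¹ * ∑ s : F, ψ (s * (Q w - t ^ 2)))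
              * ψ (-(ξ ⬝ᵥ w)) := by
            refine Finset.sum_congr rfl fun w _ => Finset.sum_congr rfl fun t _ => ?_
            rw [hdelta (Q w) (t ^ 2)]
        _ = (Fintype.card F : ℂ)⁻¹
              * ∑ w, ∑ t : F, ∑ s : F, ψ (s * (Q w - t ^ 2)) * ψ (-(ξ ⬝ᵥ w)) := by
            rw [Finset.mul_sum]
            refine Finset.sum_congr rfl fun w _ => ?_
            rw [Finset.mul_sum]
            refine Finset.sum_congr rfl fun t _ => ?_
            rw [mul_assoc, Finset.sum_mul]
        _ = (Fintype.card F : ℂ)⁻¹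
              * ∑ s : F, ∑ t : F, ∑ w, ψ (s * (Q w - t ^ 2)) * ψ (-(ξ ⬝ᵥ w)) := by
            congr 1
            calc ∑ w, ∑ t : F, ∑ s : F, ψ (s * (Q w - t ^ 2)) * ψ (-(ξ ⬝ᵥ w))
                = ∑ t : F, ∑ w, ∑ s : F, ψ (s * (Q w - t ^ 2)) * ψ (-(ξ ⬝ᵥ w)) :=
                  Finset.sum_comm
              _ = ∑ t : F, ∑ s : F, ∑ w, ψ (s * (Q w - t ^ 2)) * ψ (-(ξ ⬝ᵥ w)) :=
                  Finset.sum_congr rfl fun t _ => Finset.sum_comm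
              _ = ∑ s : F, ∑ t : F, ∑ w, ψ (s * (Q w - t ^ 2)) * ψ (-(ξ ⬝ᵥ w)) :=
                  Finset.sum_comm
        _ = (Fintype.card F : ℂ)⁻¹ * ∑ s : F,
              (∑ t : F, ψ (-(s * t ^ 2))) * (∑ w, ψ (s * Q w + (-ξ) ⬝ᵥ w)) := by
            congr 1
            exact Finset.sum_congr rfl fun s _ => inner s
    have hzeroterm : (∑ t : F, ψ (-((0:F) * t ^ 2)))
        * (∑ w, ψ ((0:F) * Q w + (-ξ) ⬝ᵥ w))
        = (Fintype.card F : ℂ) * ∑ w, ψ (-(ξ ⬝ᵥ w)) := by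
      have h1 : ∑ t : F, ψ (-((0:F) * t ^ 2)) = (Fintype.card F : ℂ) := by
        simp [Finset.card_univ]
      have h2 : ∑ w, ψ ((0:F) * Q w + (-ξ) ⬝ᵥ w) = ∑ w, ψ (-(ξ ⬝ᵥ w)) := by
        refine Finset.sum_congr rfl fun w _ => ?_
        rw [zero_mul, zero_add, neg_dotProduct]
      rw [h1, h2]
    calc fhat ξ
        = ∑ w, ((∑ t : F, if t ^ 2 = Q w then (1:ℂ) else 0) - 1) * ψ (-(ξ ⬝ᵥ w)) := by
          rw [hfhat]
          exact Finset.sum_congr rfl fun w _ => by rw [hcount]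
      _ = (∑ w, (∑ t : F, if t ^ 2 = Q w then (1:ℂ) else 0) * ψ (-(ξ ⬝ᵥ w)))
            - ∑ w, ψ (-(ξ ⬝ᵥ w)) := by
          rw [← Finset.sum_sub_distrib]
          exact Finset.sum_congr rfl fun w _ => by ring
      _ = (Fintype.card F : ℂ)⁻¹ * (∑ s : F,
            (∑ t : F, ψ (-(s * t ^ 2))) * (∑ w, ψ (s * Q w + (-ξ) ⬝ᵥ w)))
            - ∑ w, ψ (-(ξ ⬝ᵥ w)) := by rw [bigstep]
      _ = (Fintype.card F : ℂ)⁻¹ * ((∑ s ∈ Finset.univ \ {(0:F)},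
            (∑ t : F, ψ (-(s * t ^ 2))) * (∑ w, ψ (s * Q w + (-ξ) ⬝ᵥ w)))
            + (Fintype.card F : ℂ) * ∑ w, ψ (-(ξ ⬝ᵥ w)))
            - ∑ w, ψ (-(ξ ⬝ᵥ w)) := by
          rw [Finset.sum_eq_sum_sdiff_singleton_add (Finset.mem_univ (0:F)), hzeroterm]
      _ = (Fintype.card F : ℂ)⁻¹ * ∑ s ∈ Finset.univ \ {(0:F)},
            (∑ t : F, ψ (-(s * t ^ 2))) * (∑ w, ψ (s * Q w + (-ξ) ⬝ᵥ w)) := by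
          rw [mul_add, inv_mul_cancel_left₀ hcne]
          ring
  have hMeq : Real.sqrt ((Fintype.card F : ℝ) ^ (d + 1))
      = (Fintype.card F : ℝ) ^ (((d:ℝ) + 1)/2) := by
    rw [Real.sqrt_eq_rpow, ← Real.rpow_natCast ((Fintype.card F : ℝ)) (d + 1),
      ← Real.rpow_mul (by positivity)]
    congr 1
    push_cast
    ring
  have hMbound : ∀ ξ : Fin d → F, ‖fhat ξ‖ ≤ (Fintype.card F : ℝ) ^ (((d:ℝ) + 1)/2) := by
    intro ξ
    rw [← hMeq, e1 ξ, norm_mul, norm_inv, Complex.norm_natCast]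
    have hsq : Real.sqrt ((Fintype.card F : ℝ)) * Real.sqrt ((Fintype.card F : ℝ) ^ d)
        = Real.sqrt ((Fintype.card F : ℝ) ^ (d + 1)) := by
      rw [← Real.sqrt_mul (by positivity), ← pow_succ']
    have hcard : ((Finset.univ \ {(0:F)}).card : ℝ) ≤ (Fintype.card F : ℝ) := by
      have := Finset.card_le_univ (Finset.univ \ {(0:F)})
      exact_mod_cast this
    calc (Fintype.card F : ℝ)⁻¹ * ‖∑ s ∈ Finset.univ \ {(0:F)},
            (∑ t : F, ψ (-(s * t ^ 2))) * (∑ w, ψ (s * Q w + (-ξ) ⬝ᵥ w))‖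
        ≤ (Fintype.card F : ℝ)⁻¹ * ∑ s ∈ Finset.univ \ {(0:F)},
            ‖(∑ t : F, ψ (-(s * t ^ 2))) * (∑ w, ψ (s * Q w + (-ξ) ⬝ᵥ w))‖ := by
          exact mul_le_mul_of_nonneg_left (norm_sum_le _ _) (by positivity)
      _ ≤ (Fintype.card F : ℝ)⁻¹ * ∑ s ∈ Finset.univ \ {(0:F)},
            Real.sqrt ((Fintype.card F : ℝ) ^ (d + 1)) := by
          refine mul_le_mul_of_nonneg_left (Finset.sum_le_sum fun s hs => ?_) (by positivity)
          have hs0 : s ≠ 0 := by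
            have := (Finset.mem_sdiff.mp hs).2
            simpa using this
          rw [norm_mul, hWeilG s hs0, hWeilQ s hs0 (-ξ), hsq]
      _ ≤ (Fintype.card F : ℝ)⁻¹ * ((Fintype.card F : ℝ)
            * Real.sqrt ((Fintype.card F : ℝ) ^ (d + 1))) := by
          rw [Finset.sum_const, nsmul_eq_mul]
          exact mul_le_mul_of_nonneg_left
            (mul_le_mul_of_nonneg_right hcard (Real.sqrt_nonneg _)) (by positivity)
      _ = Real.sqrt ((Fintype.card F : ℝ) ^ (d + 1)) := by
          rw [inv_mul_cancel_left₀ (by positivity)]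
  have hqd : ((Fintype.card F : ℂ) ^ d) ≠ 0 := pow_ne_zero _ hcne
  have hinv : ∀ v : Fin d → F, ((quadraticChar F (Q v) : ℤ) : ℂ)
      = ((Fintype.card F : ℂ) ^ d)⁻¹ * ∑ ξ, fhat ξ * ψ (ξ ⬝ᵥ v) := by
    intro v
    have hstep : ∑ ξ, fhat ξ * ψ (ξ ⬝ᵥ v)
        = ((quadraticChar F (Q v) : ℤ) : ℂ) * (Fintype.card F : ℂ) ^ d := by
      calc ∑ ξ, fhat ξ * ψ (ξ ⬝ᵥ v)
          = ∑ ξ, ∑ w, ((quadraticChar F (Q w) : ℤ) : ℂ) * ψ (ξ ⬝ᵥ (v - w)) := by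
            refine Finset.sum_congr rfl fun ξ _ => ?_
            rw [hfhat, Finset.sum_mul]
            refine Finset.sum_congr rfl fun w _ => ?_
            rw [mul_assoc, ← AddChar.map_add_eq_mul]
            congr 2
            rw [dotProduct_sub]
            ring
        _ = ∑ w, ∑ ξ, ((quadraticChar F (Q w) : ℤ) : ℂ) * ψ (ξ ⬝ᵥ (v - w)) :=
            Finset.sum_comm
        _ = ∑ w, ((quadraticChar F (Q w) : ℤ) : ℂ)
              * (if v - w = 0 then ((Fintype.card F : ℂ) ^ d) else 0) := by
            refine Finset.sum_congr rfl fun w _ => ?_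
            rw [← Finset.mul_sum, hsumV]
        _ = ((quadraticChar F (Q v) : ℤ) : ℂ) * (Fintype.card F : ℂ) ^ d := by
          rw [Finset.sum_eq_single v]
          · rw [sub_self, if_pos rfl]
          · intro w _ hwv
            rw [if_neg (sub_ne_zero.mpr (Ne.symm hwv)), mul_zero]
          · intro hv
            exact absurd (Finset.mem_univ v) hv
    rw [hstep, mul_comm]
    exact (mul_inv_cancel_right₀ hqd _).symm
  have hmain : ∑ x ∈ C, ∑ y ∈ C, ((quadraticChar F (Q (x - y)) : ℤ) : ℂ)
      = ((Fintype.card F : ℂ) ^ d)⁻¹ * ∑ ξ, fhat ξ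
          * ((∑ x ∈ C, ψ (ξ ⬝ᵥ x)) * (starRingEnd ℂ) (∑ x ∈ C, ψ (ξ ⬝ᵥ x))) := by
    calc ∑ x ∈ C, ∑ y ∈ C, ((quadraticChar F (Q (x - y)) : ℤ) : ℂ)
        = ∑ x ∈ C, ∑ y ∈ C, ((Fintype.card F : ℂ) ^ d)⁻¹
            * ∑ ξ, fhat ξ * ψ (ξ ⬝ᵥ (x - y)) := by
          exact Finset.sum_congr rfl fun x _ => Finset.sum_congr rfl fun y _ => hinv (x - y)
      _ = ((Fintype.card F : ℂ) ^ d)⁻¹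
            * ∑ x ∈ C, ∑ y ∈ C, ∑ ξ, fhat ξ * ψ (ξ ⬝ᵥ (x - y)) := by
          rw [Finset.mul_sum]
          exact Finset.sum_congr rfl fun x _ => by rw [Finset.mul_sum]
      _ = ((Fintype.card F : ℂ) ^ d)⁻¹
            * ∑ ξ, ∑ x ∈ C, ∑ y ∈ C, fhat ξ * ψ (ξ ⬝ᵥ (x - y)) := by
          congr 1
          calc ∑ x ∈ C, ∑ y ∈ C, ∑ ξ, fhat ξ * ψ (ξ ⬝ᵥ (x - y))
              = ∑ x ∈ C, ∑ ξ, ∑ y ∈ C, fhat ξ * ψ (ξ ⬝ᵥ (x - y)) :=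
                Finset.sum_congr rfl fun x _ => Finset.sum_comm
            _ = ∑ ξ, ∑ x ∈ C, ∑ y ∈ C, fhat ξ * ψ (ξ ⬝ᵥ (x - y)) := Finset.sum_comm
      _ = ((Fintype.card F : ℂ) ^ d)⁻¹ * ∑ ξ, fhat ξ
            * ((∑ x ∈ C, ψ (ξ ⬝ᵥ x)) * (starRingEnd ℂ) (∑ x ∈ C, ψ (ξ ⬝ᵥ x))) := by
          congr 1
          refine Finset.sum_congr rfl fun ξ _ => ?_
          have hconjsum : (starRingEnd ℂ) (∑ x ∈ C, ψ (ξ ⬝ᵥ x))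
              = ∑ y ∈ C, ψ (-(ξ ⬝ᵥ y)) := by
            rw [map_sum]
            exact Finset.sum_congr rfl fun y _ => hconj _
          rw [hconjsum, Finset.sum_mul_sum, Finset.mul_sum]
          refine Finset.sum_congr rfl fun x _ => ?_
          rw [Finset.mul_sum]
          refine Finset.sum_congr rfl fun y _ => ?_
          rw [← AddChar.map_add_eq_mul]
          congr 2
          rw [dotProduct_sub]
          ring
  have hpars : ∑ ξ, (∑ x ∈ C, ψ (ξ ⬝ᵥ x)) * (starRingEnd ℂ) (∑ x ∈ C, ψ (ξ ⬝ᵥ x))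
      = (Fintype.card F : ℂ) ^ d * C.card := by
    calc ∑ ξ, (∑ x ∈ C, ψ (ξ ⬝ᵥ x)) * (starRingEnd ℂ) (∑ x ∈ C, ψ (ξ ⬝ᵥ x))
        = ∑ ξ, ∑ x ∈ C, ∑ y ∈ C, ψ (ξ ⬝ᵥ (x - y)) := by
          refine Finset.sum_congr rfl fun ξ _ => ?_
          rw [map_sum, Finset.sum_mul_sum]
          refine Finset.sum_congr rfl fun x _ => Finset.sum_congr rfl fun y _ => ?_
          rw [hconj, ← AddChar.map_add_eq_mul]
          congr 1
          rw [dotProduct_sub]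
          ring
      _ = ∑ x ∈ C, ∑ y ∈ C, ∑ ξ, ψ (ξ ⬝ᵥ (x - y)) := by
          calc ∑ ξ, ∑ x ∈ C, ∑ y ∈ C, ψ (ξ ⬝ᵥ (x - y))
              = ∑ x ∈ C, ∑ ξ, ∑ y ∈ C, ψ (ξ ⬝ᵥ (x - y)) := Finset.sum_comm
            _ = ∑ x ∈ C, ∑ y ∈ C, ∑ ξ, ψ (ξ ⬝ᵥ (x - y)) :=
                Finset.sum_congr rfl fun x _ => Finset.sum_comm
      _ = ∑ x ∈ C, ∑ y ∈ C, (if x - y = 0 then ((Fintype.card F : ℂ) ^ d) else 0) := by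
          exact Finset.sum_congr rfl fun x _ => Finset.sum_congr rfl fun y _ => hsumV _
      _ = ∑ x ∈ C, (Fintype.card F : ℂ) ^ d := by
          refine Finset.sum_congr rfl fun x hx => ?_
          rw [Finset.sum_eq_single_of_mem x hx]
          · rw [sub_self, if_pos rfl]
          · intro y _ hyx
            rw [if_neg (sub_ne_zero.mpr (Ne.symm hyx))]
      _ = (Fintype.card F : ℂ) ^ d * C.card := by
          rw [Finset.sum_const, nsmul_eq_mul, mul_comm]
  have hparsR : ∑ ξ : Fin d → F, ‖∑ x ∈ C, ψ (ξ ⬝ᵥ x)‖ ^ 2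
      = (Fintype.card F : ℝ) ^ d * C.card := by
    have hcast : ((∑ ξ : Fin d → F, ‖∑ x ∈ C, ψ (ξ ⬝ᵥ x)‖ ^ 2 : ℝ) : ℂ)
        = ∑ ξ : Fin d → F, (∑ x ∈ C, ψ (ξ ⬝ᵥ x)) * (starRingEnd ℂ) (∑ x ∈ C, ψ (ξ ⬝ᵥ x)) := by
      push_cast
      refine Finset.sum_congr rfl fun ξ _ => ?_
      rw [Complex.mul_conj]
      norm_cast
      rw [Complex.normSq_eq_norm_sq]
    rw [hpars] at hcast
    exact_mod_cast hcast
  have hpowpos : (0:ℝ) < (Fintype.card F : ℝ) ^ d := by positivity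
  have hnormB : ‖∑ x ∈ C, ∑ y ∈ C, ((quadraticChar F (Q (x - y)) : ℤ) : ℂ)‖
      ≤ (Fintype.card F : ℝ) ^ (((d:ℝ) + 1)/2) * C.card := by
    rw [hmain, norm_mul, norm_inv, norm_pow, Complex.norm_natCast]
    have hbig : ‖∑ ξ, fhat ξ
          * ((∑ x ∈ C, ψ (ξ ⬝ᵥ x)) * (starRingEnd ℂ) (∑ x ∈ C, ψ (ξ ⬝ᵥ x)))‖
        ≤ (Fintype.card F : ℝ) ^ (((d:ℝ) + 1)/2)
          * ((Fintype.card F : ℝ) ^ d * C.card) := by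
      calc ‖∑ ξ, fhat ξ
              * ((∑ x ∈ C, ψ (ξ ⬝ᵥ x)) * (starRingEnd ℂ) (∑ x ∈ C, ψ (ξ ⬝ᵥ x)))‖
          ≤ ∑ ξ, ‖fhat ξ
              * ((∑ x ∈ C, ψ (ξ ⬝ᵥ x)) * (starRingEnd ℂ) (∑ x ∈ C, ψ (ξ ⬝ᵥ x)))‖ :=
            norm_sum_le _ _
        _ = ∑ ξ : Fin d → F, ‖fhat ξ‖ * ‖∑ x ∈ C, ψ (ξ ⬝ᵥ x)‖ ^ 2 := by
            refine Finset.sum_congr rfl fun ξ _ => ?_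
            rw [norm_mul, Complex.mul_conj]
            congr 1
            rw [Complex.norm_real, Real.norm_eq_abs, abs_of_nonneg (Complex.normSq_nonneg _),
              Complex.normSq_eq_norm_sq]
        _ ≤ ∑ ξ : Fin d → F, (Fintype.card F : ℝ) ^ (((d:ℝ) + 1)/2)
              * ‖∑ x ∈ C, ψ (ξ ⬝ᵥ x)‖ ^ 2 :=
            Finset.sum_le_sum fun ξ _ =>
              mul_le_mul_of_nonneg_right (hMbound ξ) (by positivity)
        _ = (Fintype.card F : ℝ) ^ (((d:ℝ) + 1)/2)
              * ∑ ξ : Fin d → F, ‖∑ x ∈ C, ψ (ξ ⬝ᵥ x)‖ ^ 2 := by rw [Finset.mul_sum]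
        _ = (Fintype.card F : ℝ) ^ (((d:ℝ) + 1)/2)
              * ((Fintype.card F : ℝ) ^ d * C.card) := by rw [hparsR]
    calc ((Fintype.card F : ℝ) ^ d)⁻¹ * ‖∑ ξ, fhat ξ
            * ((∑ x ∈ C, ψ (ξ ⬝ᵥ x)) * (starRingEnd ℂ) (∑ x ∈ C, ψ (ξ ⬝ᵥ x)))‖
        ≤ ((Fintype.card F : ℝ) ^ d)⁻¹ * ((Fintype.card F : ℝ) ^ (((d:ℝ) + 1)/2)
            * ((Fintype.card F : ℝ) ^ d * C.card)) :=
          mul_le_mul_of_nonneg_left hbig (by positivity)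
      _ = (Fintype.card F : ℝ) ^ (((d:ℝ) + 1)/2) * C.card := by
          rw [mul_left_comm, inv_mul_cancel_left₀ hpowpos.ne']
  have hcastS : ((∑ x ∈ C, ∑ y ∈ C, (quadraticChar F (Q (x - y)) : ℝ) : ℝ) : ℂ)
      = ∑ x ∈ C, ∑ y ∈ C, ((quadraticChar F (Q (x - y)) : ℤ) : ℂ) := by
    push_cast
    rfl
  have habs : |∑ x ∈ C, ∑ y ∈ C, (quadraticChar F (Q (x - y)) : ℝ)|
      ≤ (Fintype.card F : ℝ) ^ (((d:ℝ) + 1)/2) * C.card := by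
    have h1 : |∑ x ∈ C, ∑ y ∈ C, (quadraticChar F (Q (x - y)) : ℝ)|
        = ‖((∑ x ∈ C, ∑ y ∈ C, (quadraticChar F (Q (x - y)) : ℝ) : ℝ) : ℂ)‖ := by
      rw [Complex.norm_real, Real.norm_eq_abs]
    rw [h1, hcastS]
    exact hnormB
  have hs2 : (1:ℝ) ≤ Real.sqrt 2 := by
    have h := Real.sqrt_le_sqrt (show (1:ℝ) ≤ 2 by norm_num)
    rwa [Real.sqrt_one] at h
  calc |∑ x ∈ C, ∑ y ∈ C, (quadraticChar F (Q (x - y)) : ℝ)|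
      ≤ (Fintype.card F : ℝ) ^ (((d:ℝ) + 1)/2) * C.card := habs
    _ = 1 * ((Fintype.card F : ℝ) ^ (((d:ℝ) + 1)/2) * C.card) := (one_mul _).symm
    _ ≤ Real.sqrt 2 * ((Fintype.card F : ℝ) ^ (((d:ℝ) + 1)/2) * C.card) :=
        mul_le_mul_of_nonneg_right hs2
          (mul_nonneg (Real.rpow_nonneg (Nat.cast_nonneg _) _) (Nat.cast_nonneg _))
    _ = Real.sqrt 2 * (Fintype.card F : ℝ) ^ (((d:ℝ) + 1)/2) * C.card :=
        (mul_assoc _ _ _).symm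
end

section
/- Let q be an odd prime power and let t, r₁, r₂ ∈ F_q all be non-zero. If D(t,r₁,r₂) = 0, then η(t) = η(r₁) = η(r₂). -/
open Finset

private lemma quadChar_eq_of_mul_sq {F : Type*} [Field F] [Fintype F] [DecidableEq F]
    (hF : ringChar F ≠ 2) {a b c : F} (ha : a ≠ 0) (hb : b ≠ 0)
    (h : a * b = c ^ 2) : quadraticChar F a = quadraticChar F b := by
  have hc : c ≠ 0 := by
    intro hc0; rw [hc0] at h; simp at h; tauto
  have h1 : quadraticChar F a * quadraticChar F b = 1 := by
    rw [← map_mul, h, pow_two, map_mul, ← pow_two, quadraticChar_sq_one hc]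
  have h2 : quadraticChar F a * quadraticChar F a = 1 := by
    rw [← pow_two, quadraticChar_sq_one ha]
  calc quadraticChar F a = quadraticChar F a * 1 := by ring
    _ = quadraticChar F a * (quadraticChar F a * quadraticChar F b) := by rw [h1]
    _ = (quadraticChar F a * quadraticChar F a) * quadraticChar F b := by ring
    _ = quadraticChar F b := by rw [h2]; ring

/-- If `D(t,r₁,r₂) = 0` for non-zero `t, r₁, r₂`, then `η(t) = η(r₁) = η(r₂)`. -/
theorem stmt13 {F : Type*} [Field F] [Fintype F] [DecidableEq F]
    (hq : Odd (Fintype.card F))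
    (t r₁ r₂ : F) (ht : t ≠ 0) (h1 : r₁ ≠ 0) (h2 : r₂ ≠ 0)
    (hD : t^2 + r₁^2 + r₂^2 - 2*(t*r₁ + t*r₂ + r₁*r₂) = 0) :
    quadraticChar F t = quadraticChar F r₁ ∧
      quadraticChar F r₁ = quadraticChar F r₂ := by
  have hF : ringChar F ≠ 2 := by
    intro h
    have := FiniteField.even_card_of_char_two h
    rw [Nat.odd_iff] at hq
    omega
  have h2ne : (2 : F) ≠ 0 := Ring.two_ne_zero hF
  have key1 : t * r₂ = ((r₁ - t - r₂) / 2) ^ 2 := by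
    field_simp
    ring_nf
    ring_nf at hD
    linear_combination -hD
  have key2 : r₁ * r₂ = ((t - r₁ - r₂) / 2) ^ 2 := by
    field_simp
    ring_nf
    ring_nf at hD
    linear_combination -hD
  have e1 := quadChar_eq_of_mul_sq hF ht h2 key1
  have e2 := quadChar_eq_of_mul_sq hF h1 h2 key2
  exact ⟨e1.trans e2.symm, e2⟩
end

section
/- Let d ≥ 3 be odd, let q be an odd prime power, let i ∈ {3,4}, and write Q = Q_i^d. Let s₁, s₂ be Q-spheres with distinct centers c₁ ≠ c₂, equal radii r₁ = r₂ = r, and Q(c₁−c₂) = 0. Then |s₁ ∩ s₂| = q^{d−2} + (−1)^{i+1}·η(−r)·q^{(d−1)/2} (in particular, |s₁ ∩ s₂| = q^{d−2} when r = 0, since η(0) = 0). -/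
open Finset

namespace Stmt16Aux
variable {F : Type*} [Field F] [Fintype F] [DecidableEq F]

/-- generic odd-dimension form -/
def Qg (a' : F) {n : ℕ} (x : Fin n → F) : F :=
  pairsForm ((n-1)/2) x - (if h : 1 ≤ n then a' * x ⟨n-1, by omega⟩ ^ 2 else 0)

def Bg (a' : F) {m : ℕ} (u v : Fin (2*m+1) → F) : F :=
  (∑ j ∈ Finset.range m, if h : 2*j+1 < 2*m+1 then
      u ⟨2*j, by omega⟩ * v ⟨2*j+1, h⟩ + u ⟨2*j+1, h⟩ * v ⟨2*j, by omega⟩ else 0)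
  - 2 * a' * u ⟨2*m, by omega⟩ * v ⟨2*m, by omega⟩

lemma Qg_eq (a' : F) (m : ℕ) (x : Fin (2*m+1) → F) :
    Qg a' x = pairsForm m x - a' * x ⟨2*m, by omega⟩ ^ 2 := by
  unfold Qg
  have h1 : (2*m+1-1)/2 = m := by omega
  rw [h1, dif_pos (show 1 ≤ 2*m+1 by omega)]
  congr 2

lemma Qg_add (a' : F) {m : ℕ} (u v : Fin (2*m+1) → F) :
    Qg a' (u + v) = Qg a' u + Qg a' v + Bg a' u v := by
  simp only [Qg_eq, Bg, pairsForm]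
  rw [show (∑ j ∈ Finset.range m, if h : 2*j+1 < 2*m+1 then
        (u+v) ⟨2*j, by omega⟩ * (u+v) ⟨2*j+1, h⟩ else 0)
      = ∑ j ∈ Finset.range m,
        ((if h : 2*j+1 < 2*m+1 then u ⟨2*j, by omega⟩ * u ⟨2*j+1, h⟩ else 0)
        + (if h : 2*j+1 < 2*m+1 then v ⟨2*j, by omega⟩ * v ⟨2*j+1, h⟩ else 0)
        + (if h : 2*j+1 < 2*m+1 then
            u ⟨2*j, by omega⟩ * v ⟨2*j+1, h⟩ + u ⟨2*j+1, h⟩ * v ⟨2*j, by omega⟩ else 0))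
      from Finset.sum_congr rfl fun j hj => by
        rw [Finset.mem_range] at hj
        rw [dif_pos (show 2*j+1 < 2*m+1 by omega), dif_pos (show 2*j+1 < 2*m+1 by omega),
          dif_pos (show 2*j+1 < 2*m+1 by omega), dif_pos (show 2*j+1 < 2*m+1 by omega)]
        simp only [Pi.add_apply]; ring]
  rw [Finset.sum_add_distrib, Finset.sum_add_distrib]
  simp only [Pi.add_apply]
  ring

lemma Qg_smul (a' : F) {m : ℕ} (t : F) (u : Fin (2*m+1) → F) :
    Qg a' (t • u) = t^2 * Qg a' u := by
  simp only [Qg_eq, pairsForm]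
  rw [show (∑ j ∈ Finset.range m, if h : 2*j+1 < 2*m+1 then
        (t • u) ⟨2*j, by omega⟩ * (t • u) ⟨2*j+1, h⟩ else 0)
      = ∑ j ∈ Finset.range m,
        t^2 * (if h : 2*j+1 < 2*m+1 then u ⟨2*j, by omega⟩ * u ⟨2*j+1, h⟩ else 0)
      from Finset.sum_congr rfl fun j hj => by
        rw [Finset.mem_range] at hj
        rw [dif_pos (show 2*j+1 < 2*m+1 by omega), dif_pos (show 2*j+1 < 2*m+1 by omega)]
        simp only [Pi.smul_apply, smul_eq_mul]; ring]
  rw [← Finset.mul_sum]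
  simp only [Pi.smul_apply, smul_eq_mul]
  ring

lemma Bg_add_left (a' : F) {m : ℕ} (u w v : Fin (2*m+1) → F) :
    Bg a' (u + w) v = Bg a' u v + Bg a' w v := by
  simp only [Bg]
  rw [show (∑ j ∈ Finset.range m, if h : 2*j+1 < 2*m+1 then
        (u+w) ⟨2*j, by omega⟩ * v ⟨2*j+1, h⟩ + (u+w) ⟨2*j+1, h⟩ * v ⟨2*j, by omega⟩ else 0)
      = ∑ j ∈ Finset.range m,
        ((if h : 2*j+1 < 2*m+1 then u ⟨2*j, by omega⟩ * v ⟨2*j+1, h⟩ + u ⟨2*j+1, h⟩ * v ⟨2*j, by omega⟩ else 0)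
        + (if h : 2*j+1 < 2*m+1 then w ⟨2*j, by omega⟩ * v ⟨2*j+1, h⟩ + w ⟨2*j+1, h⟩ * v ⟨2*j, by omega⟩ else 0))
      from Finset.sum_congr rfl fun j hj => by
        rw [Finset.mem_range] at hj
        rw [dif_pos (show 2*j+1 < 2*m+1 by omega), dif_pos (show 2*j+1 < 2*m+1 by omega),
          dif_pos (show 2*j+1 < 2*m+1 by omega)]
        simp only [Pi.add_apply]; ring]
  rw [Finset.sum_add_distrib]
  simp only [Pi.add_apply]
  ring

lemma Bg_smul_left (a' : F) {m : ℕ} (t : F) (u v : Fin (2*m+1) → F) :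
    Bg a' (t • u) v = t * Bg a' u v := by
  simp only [Bg]
  rw [show (∑ j ∈ Finset.range m, if h : 2*j+1 < 2*m+1 then
        (t • u) ⟨2*j, by omega⟩ * v ⟨2*j+1, h⟩ + (t • u) ⟨2*j+1, h⟩ * v ⟨2*j, by omega⟩ else 0)
      = ∑ j ∈ Finset.range m,
        t * (if h : 2*j+1 < 2*m+1 then u ⟨2*j, by omega⟩ * v ⟨2*j+1, h⟩ + u ⟨2*j+1, h⟩ * v ⟨2*j, by omega⟩ else 0)
      from Finset.sum_congr rfl fun j hj => by
        rw [Finset.mem_range] at hj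
        rw [dif_pos (show 2*j+1 < 2*m+1 by omega), dif_pos (show 2*j+1 < 2*m+1 by omega)]
        simp only [Pi.smul_apply, smul_eq_mul]; ring]
  rw [← Finset.mul_sum]
  simp only [Pi.smul_apply, smul_eq_mul]
  ring

lemma Bg_smul_right (a' : F) {m : ℕ} (t : F) (u v : Fin (2*m+1) → F) :
    Bg a' u (t • v) = t * Bg a' u v := by
  simp only [Bg]
  rw [show (∑ j ∈ Finset.range m, if h : 2*j+1 < 2*m+1 then
        u ⟨2*j, by omega⟩ * (t • v) ⟨2*j+1, h⟩ + u ⟨2*j+1, h⟩ * (t • v) ⟨2*j, by omega⟩ else 0)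
      = ∑ j ∈ Finset.range m,
        t * (if h : 2*j+1 < 2*m+1 then u ⟨2*j, by omega⟩ * v ⟨2*j+1, h⟩ + u ⟨2*j+1, h⟩ * v ⟨2*j, by omega⟩ else 0)
      from Finset.sum_congr rfl fun j hj => by
        rw [Finset.mem_range] at hj
        rw [dif_pos (show 2*j+1 < 2*m+1 by omega), dif_pos (show 2*j+1 < 2*m+1 by omega)]
        simp only [Pi.smul_apply, smul_eq_mul]; ring]
  rw [← Finset.mul_sum]
  simp only [Pi.smul_apply, smul_eq_mul]
  ring

lemma Bg_self (a' : F) {m : ℕ} (u : Fin (2*m+1) → F) :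
    Bg a' u u = 2 * Qg a' u := by
  have h1 := Qg_add a' u u
  have h2 := Qg_smul a' (2:F) u
  rw [two_smul] at h2
  rw [h2] at h1
  linear_combination -h1

lemma Qg_cons (a' : F) {m : ℕ} (u v : F) (y : Fin (2*m+1) → F) :
    Qg a' (Fin.cons u (Fin.cons v y) : Fin (2*(m+1)+1) → F) = u * v + Qg a' y := by
  rw [Qg_eq a' (m+1), Qg_eq a' m]
  have hpf : pairsForm (m+1) (Fin.cons u (Fin.cons v y) : Fin (2*(m+1)+1) → F)
      = pairsForm m y + u * v := by
    unfold pairsForm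
    rw [Finset.sum_range_succ']
    congr 1
    · apply Finset.sum_congr rfl
      intro i hi
      rw [Finset.mem_range] at hi
      rw [dif_pos (show 2*(i+1)+1 < 2*(m+1)+1 by omega),
        dif_pos (show 2*i+1 < 2*m+1 by omega)]
      rfl
  rw [hpf]
  have hlast : (Fin.cons u (Fin.cons v y) : Fin (2*(m+1)+1) → F) ⟨2*(m+1), by omega⟩
      = y ⟨2*m, by omega⟩ := rfl
  rw [hlast]
  ring

lemma Bg_exists_ne {a' : F} (h2 : (2:F) ≠ 0) (ha' : a' ≠ 0) {m : ℕ}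
    {c : Fin (2*m+1) → F} (hc : c ≠ 0) : ∃ y, Bg a' y c ≠ 0 := by
  obtain ⟨k, hk⟩ : ∃ k, c k ≠ 0 := by
    by_contra h; push_neg at h; exact hc (funext h)
  by_cases hk2m : (k : ℕ) = 2*m
  · refine ⟨Pi.single k 1, ?_⟩
    unfold Bg
    rw [Finset.sum_eq_zero (fun j hj => by
      rw [Finset.mem_range] at hj
      rw [dif_pos (show 2*j+1 < 2*m+1 by omega),
        Pi.single_eq_of_ne (Fin.ne_of_val_ne (by omega : (2*j : ℕ) ≠ (k:ℕ))),
        Pi.single_eq_of_ne (Fin.ne_of_val_ne (by omega : (2*j+1 : ℕ) ≠ (k:ℕ)))]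
      ring)]
    have hkk : (⟨2*m, by omega⟩ : Fin (2*m+1)) = k :=
      Fin.ext (show (2*m : ℕ) = (k : ℕ) by omega)
    rw [hkk, Pi.single_eq_same]
    intro h
    have h0 : (2*a') * c k = 0 := by linear_combination -h
    rcases mul_eq_zero.mp h0 with h' | h'
    · exact (mul_ne_zero h2 ha') h'
    · exact hk h'
  · -- k.val < 2*m : partner index
    rcases Nat.even_or_odd (k : ℕ) with he | ho
    · obtain ⟨j0, hj0⟩ := he
      have hj0m : j0 < m := by omega
      refine ⟨Pi.single ⟨2*j0+1, by omega⟩ 1, ?_⟩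
      unfold Bg
      rw [Finset.sum_eq_single_of_mem j0 (Finset.mem_range.mpr hj0m) (fun j hj hne => by
        rw [Finset.mem_range] at hj
        rw [dif_pos (show 2*j+1 < 2*m+1 by omega),
          Pi.single_eq_of_ne (Fin.ne_of_val_ne (by omega : (2*j : ℕ) ≠ 2*j0+1)),
          Pi.single_eq_of_ne (Fin.ne_of_val_ne (by omega : (2*j+1 : ℕ) ≠ 2*j0+1))]
        ring)]
      rw [dif_pos (show 2*j0+1 < 2*m+1 by omega),
        Pi.single_eq_of_ne (Fin.ne_of_val_ne (by omega : (2*j0 : ℕ) ≠ 2*j0+1)),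
        Pi.single_eq_same,
        Pi.single_eq_of_ne (Fin.ne_of_val_ne (by omega : (2*m : ℕ) ≠ 2*j0+1))]
      have hck : c ⟨2*j0, by omega⟩ = c k := by
        congr 1; exact Fin.ext (show (2*j0 : ℕ) = (k : ℕ) by omega)
      rw [hck]
      intro h
      exact hk (by linear_combination h)
    · obtain ⟨j0, hj0⟩ := ho
      have hj0m : j0 < m := by omega
      refine ⟨Pi.single ⟨2*j0, by omega⟩ 1, ?_⟩
      unfold Bg
      rw [Finset.sum_eq_single_of_mem j0 (Finset.mem_range.mpr hj0m) (fun j hj hne => by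
        rw [Finset.mem_range] at hj
        rw [dif_pos (show 2*j+1 < 2*m+1 by omega),
          Pi.single_eq_of_ne (Fin.ne_of_val_ne (by omega : (2*j : ℕ) ≠ 2*j0)),
          Pi.single_eq_of_ne (Fin.ne_of_val_ne (by omega : (2*j+1 : ℕ) ≠ 2*j0))]
        ring)]
      rw [dif_pos (show 2*j0+1 < 2*m+1 by omega),
        Pi.single_eq_same,
        Pi.single_eq_of_ne (Fin.ne_of_val_ne (by omega : (2*j0+1 : ℕ) ≠ 2*j0)),
        Pi.single_eq_of_ne (Fin.ne_of_val_ne (by omega : (2*m : ℕ) ≠ 2*j0))]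
      have hck : c ⟨2*j0+1, by omega⟩ = c k := by
        congr 1; exact Fin.ext (show (2*j0+1 : ℕ) = (k : ℕ) by omega)
      rw [hck]
      intro h
      exact hk (by linear_combination h)

lemma fiber_card {n : ℕ} (hn : 1 ≤ n) (L : (Fin n → F) → F)
    (Ladd : ∀ u v, L (u + v) = L u + L v)
    (Lsmul : ∀ (t : F) u, L (t • u) = t * L u)
    (hL : ∃ y, L y ≠ 0) :
    (univ.filter fun y : Fin n → F => L y = 0).card = Fintype.card F ^ (n-1) := by
  obtain ⟨y0, hy0⟩ := hL
  have hfib : ∀ t : F, (univ.filter fun y : Fin n → F => L y = t).card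
      = (univ.filter fun y : Fin n → F => L y = 0).card := by
    intro t
    apply Finset.card_nbij' (fun y => y + (-(t / L y0)) • y0) (fun y => y + (t / L y0) • y0)
    · intro y hy
      simp only [Finset.mem_filter, Finset.mem_univ, true_and, Finset.mem_coe] at hy ⊢
      rw [Ladd, Lsmul, hy, neg_mul, div_mul_cancel₀ t hy0]; ring
    · intro y hy
      simp only [Finset.mem_filter, Finset.mem_univ, true_and, Finset.mem_coe] at hy ⊢
      rw [Ladd, Lsmul, hy, div_mul_cancel₀ t hy0]; ring
    · intro y _
      beta_reduce; rw [add_assoc, ← add_smul, neg_add_cancel, zero_smul, add_zero]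
    · intro y _
      beta_reduce; rw [add_assoc, ← add_smul, add_neg_cancel, zero_smul, add_zero]
  have htot : ∑ t : F, (univ.filter fun y : Fin n → F => L y = t).card
      = Fintype.card F ^ n := by
    rw [← Finset.card_eq_sum_card_fiberwise (fun y (_ : y ∈ univ) => Finset.mem_univ (L y))]
    rw [Finset.card_univ, Fintype.card_fun, Fintype.card_fin]
  have h1 : Fintype.card F * (univ.filter fun y : Fin n → F => L y = 0).card
      = Fintype.card F ^ n := by
    rw [← htot]
    rw [Finset.sum_congr rfl (fun t _ => hfib t), Finset.sum_const, Finset.card_univ,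
      smul_eq_mul]
  have h2 : Fintype.card F ^ n = Fintype.card F * Fintype.card F ^ (n-1) := by
    rw [← pow_succ']; congr 1; omega
  exact Nat.eq_of_mul_eq_mul_left Fintype.card_pos (h1.trans h2)

lemma mul_count (t : F) :
    (∑ u : F, ∑ v : F, if u * v = t then (1:ℤ) else 0)
      = ((Fintype.card F : ℤ) - 1) + (if t = 0 then (Fintype.card F : ℤ) else 0) := by
  have hinner : ∀ u : F, (∑ v : F, if u * v = t then (1:ℤ) else 0)
      = if u = 0 then (if t = 0 then (Fintype.card F : ℤ) else 0) else 1 := by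
    intro u
    by_cases hu : u = 0
    · subst hu
      simp only [zero_mul, if_pos rfl]
      by_cases ht : t = 0
      · subst ht
        simp [Finset.card_univ]
      · simp [eq_comm, ht]
    · have hiff : ∀ v : F, (u * v = t) ↔ (v = u⁻¹ * t) := by
        intro v
        constructor
        · intro h; rw [← h, inv_mul_cancel_left₀ hu]
        · intro h; rw [h, mul_inv_cancel_left₀ hu]
      simp only [hiff, if_neg hu]
      rw [Finset.sum_ite_eq' Finset.univ (u⁻¹ * t) (fun _ => (1:ℤ))]
      simp
  simp only [hinner]
  have hsplit : ∀ u : F, (if u = 0 then (if t = 0 then (Fintype.card F : ℤ) else 0) else 1)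
      = (if u = 0 then (if t = 0 then (Fintype.card F : ℤ) else 0) - 1 else 0) + 1 := by
    intro u; split <;> ring
  simp only [hsplit, Finset.sum_add_distrib, Finset.sum_ite_eq', Finset.sum_const,
    Finset.card_univ, Finset.mem_univ, if_true, smul_eq_mul, mul_one]
  ring

lemma quadChar_inv {a' : F} (ha' : a' ≠ 0) :
    quadraticChar F a'⁻¹ = quadraticChar F a' := by
  have hne : quadraticChar F a' ≠ 0 := by
    rw [Ne, quadraticChar_eq_zero_iff]; exact ha'
  have h1 : quadraticChar F a'⁻¹ * quadraticChar F a' = 1 := by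
    rw [← map_mul, inv_mul_cancel₀ ha', map_one]
  have h2 : quadraticChar F a' * quadraticChar F a' = 1 := by
    have := quadraticChar_sq_one ha'
    rwa [pow_two] at this
  exact mul_right_cancel₀ hne (h1.trans h2.symm)

lemma Qg_count (hF : ringChar F ≠ 2) {a' : F} (ha' : a' ≠ 0) :
    ∀ (m : ℕ) (b : F),
      ((univ.filter fun x : Fin (2*m+1) → F => Qg a' x = b).card : ℤ)
        = (Fintype.card F : ℤ) ^ (2*m)
          + quadraticChar F a' * quadraticChar F (-b) * (Fintype.card F : ℤ) ^ m := by
  intro m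
  induction m with
  | zero =>
    intro b
    have hcard : (univ.filter fun x : Fin (2*0+1) → F => Qg a' x = b).card
        = (univ.filter fun u : F => u ^ 2 = -b * a'⁻¹).card := by
      apply Finset.card_nbij' (fun x => x ⟨0, by omega⟩) (fun u => fun _ => u)
      · intro x hx
        simp only [Finset.mem_filter, Finset.mem_univ, true_and, Finset.mem_coe] at hx ⊢
        rw [Qg_eq a' 0, pairsForm, Finset.range_zero, Finset.sum_empty] at hx
        rw [eq_mul_inv_iff_mul_eq₀ ha']
        linear_combination -hx
      · intro u hu
        simp only [Finset.mem_filter, Finset.mem_univ, true_and, Finset.mem_coe] at hu ⊢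
        rw [Qg_eq a' 0, pairsForm, Finset.range_zero, Finset.sum_empty]
        rw [eq_mul_inv_iff_mul_eq₀ ha'] at hu
        linear_combination -hu
      · intro x _
        funext k
        have : k = (⟨0, by omega⟩ : Fin (2*0+1)) := Fin.ext (by omega)
        rw [this]
      · intro u _
        rfl
    rw [hcard]
    have hs := quadraticChar_card_sqrts hF (-b * a'⁻¹)
    rw [Set.toFinset_setOf] at hs
    rw [hs, map_mul, quadChar_inv ha']
    ring
  | succ m ih =>
    intro b
    have hcard : (univ.filter fun x : Fin (2*(m+1)+1) → F => Qg a' x = b).card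
        = (univ.filter fun z : (Fin (2*m+1) → F) × F × F =>
            z.2.1 * z.2.2 + Qg a' z.1 = b).card := by
      apply Finset.card_nbij'
        (fun x => ((fun j : Fin (2*m+1) => x ⟨(j:ℕ)+2, by omega⟩), x ⟨0, by omega⟩, x ⟨1, by omega⟩))
        (fun z => (Fin.cons z.2.1 (Fin.cons z.2.2 z.1) : Fin (2*(m+1)+1) → F))
      · intro x hx
        simp only [Finset.mem_filter, Finset.mem_univ, true_and, Finset.mem_coe] at hx ⊢
        have hxeq : (Fin.cons (x ⟨0, by omega⟩) (Fin.cons (x ⟨1, by omega⟩)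
            (fun j : Fin (2*m+1) => x ⟨(j:ℕ)+2, by omega⟩)) : Fin (2*(m+1)+1) → F) = x := by
          funext k
          rcases k with ⟨(_ | _ | k), hk⟩ <;> rfl
        have := Qg_cons a' (x ⟨0, by omega⟩) (x ⟨1, by omega⟩)
          (fun j : Fin (2*m+1) => x ⟨(j:ℕ)+2, by omega⟩)
        rw [hxeq] at this
        rw [← this, hx]
      · intro z hz
        simp only [Finset.mem_filter, Finset.mem_univ, true_and, Finset.mem_coe] at hz ⊢
        rw [Qg_cons]
        exact hz
      · intro x _
        funext k
        rcases k with ⟨(_ | _ | k), hk⟩ <;> rfl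
      · intro z _
        rfl
    rw [hcard]
    have hsum : ((univ.filter fun z : (Fin (2*m+1) → F) × F × F =>
        z.2.1 * z.2.2 + Qg a' z.1 = b).card : ℤ)
        = ∑ y : Fin (2*m+1) → F, ∑ u : F, ∑ v : F,
            if u * v + Qg a' y = b then (1:ℤ) else 0 := by
      rw [Finset.card_filter]
      push_cast
      rw [Fintype.sum_prod_type]
      exact Finset.sum_congr rfl fun y _ => Fintype.sum_prod_type _
    rw [hsum]
    have hinner : ∀ y : Fin (2*m+1) → F,
        (∑ u : F, ∑ v : F, if u * v + Qg a' y = b then (1:ℤ) else 0)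
          = ((Fintype.card F : ℤ) - 1)
            + (if Qg a' y = b then (Fintype.card F : ℤ) else 0) := by
      intro y
      have hiff : ∀ u v : F, (u * v + Qg a' y = b) ↔ (u * v = b - Qg a' y) := by
        intro u v; constructor
        · intro h; linear_combination h
        · intro h; linear_combination h
      simp only [hiff]
      rw [mul_count (b - Qg a' y)]
      congr 1
      exact if_congr (sub_eq_zero.trans eq_comm) rfl rfl
    simp only [hinner]
    rw [Finset.sum_add_distrib, Finset.sum_const, Finset.card_univ, Fintype.card_fun,
      Fintype.card_fin]
    have hfil : (∑ y : Fin (2*m+1) → F, if Qg a' y = b then (Fintype.card F : ℤ) else 0)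
        = (Fintype.card F : ℤ) * ((univ.filter fun y : Fin (2*m+1) → F => Qg a' y = b).card : ℤ) := by
      rw [Finset.card_filter]
      push_cast
      rw [Finset.mul_sum]
      exact Finset.sum_congr rfl fun y _ => by split <;> ring
    rw [hfil, ih b]
    simp only [nsmul_eq_mul]
    push_cast
    ring

lemma key (hF : ringChar F ≠ 2) {a' : F} (ha' : a' ≠ 0) {m : ℕ} (hm : 1 ≤ m)
    {c : Fin (2*m+1) → F} (hc : c ≠ 0) (hQc : Qg a' c = 0) (r : F) :
    ((univ.filter fun y : Fin (2*m+1) → F => Qg a' y = r ∧ Qg a' (y + c) = r).card : ℤ)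
      = (Fintype.card F : ℤ) ^ (2*m-1)
        + quadraticChar F a' * quadraticChar F (-r) * (Fintype.card F : ℤ) ^ m := by
  have h2 : (2:F) ≠ 0 := Ring.two_ne_zero hF
  have hL : ∃ y : Fin (2*m+1) → F, Bg a' y c ≠ 0 := Bg_exists_ne h2 ha' hc
  have hLadd : ∀ (y : Fin (2*m+1) → F) (s : F), Bg a' (y + s • c) c = Bg a' y c := by
    intro y s
    rw [Bg_add_left, Bg_smul_left, Bg_self, hQc]; ring
  have hQadd : ∀ (y : Fin (2*m+1) → F) (s : F),
      Qg a' (y + s • c) = Qg a' y + s * Bg a' y c := by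
    intro y s
    rw [Qg_add, Qg_smul, hQc, Bg_smul_right]; ring
  -- replace the second condition by `Bg a' y c = 0`
  have hSeq : (univ.filter fun y : Fin (2*m+1) → F => Qg a' y = r ∧ Qg a' (y + c) = r)
      = univ.filter fun y : Fin (2*m+1) → F => Qg a' y = r ∧ Bg a' y c = 0 := by
    apply Finset.filter_congr
    intro y _
    have hyc : Qg a' (y + c) = Qg a' y + Bg a' y c := by
      have := hQadd y 1
      rwa [one_smul, one_mul] at this
    constructor
    · rintro ⟨h1, h2'⟩
      refine ⟨h1, ?_⟩
      rw [hyc, h1] at h2'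
      linear_combination h2'
    · rintro ⟨h1, h2'⟩
      exact ⟨h1, by rw [hyc, h1, h2', add_zero]⟩
  rw [hSeq]
  -- fibers of Bg over nonzero values
  have hfib : ∀ t : F, t ≠ 0 →
      (univ.filter fun y : Fin (2*m+1) → F => Bg a' y c = t).card
        = (univ.filter fun y : Fin (2*m+1) → F => Qg a' y = r ∧ Bg a' y c = t).card
            * Fintype.card F := by
    intro t ht
    rw [← Finset.card_univ (α := F), ← Finset.card_product]
    apply Finset.card_nbij'
      (fun y => (y + ((r - Qg a' y)/t) • c, Qg a' y))
      (fun z => z.1 + ((z.2 - r)/t) • c)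
    · intro y hy
      simp only [Finset.mem_filter, Finset.mem_univ, true_and, Finset.mem_coe] at hy
      rw [Finset.mem_coe, Finset.mem_product]
      refine ⟨?_, Finset.mem_univ _⟩
      simp only [Finset.mem_filter, Finset.mem_univ, true_and]
      constructor
      · rw [hQadd, hy, div_mul_cancel₀ _ ht]; ring
      · rw [hLadd, hy]
    · intro z hz
      rw [Finset.mem_coe, Finset.mem_product] at hz
      obtain ⟨hz1, _⟩ := hz
      simp only [Finset.mem_filter, Finset.mem_univ, true_and, Finset.mem_coe] at hz1 ⊢
      rw [hLadd, hz1.2]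
    · intro y hy
      simp only [Finset.mem_filter, Finset.mem_univ, true_and, Finset.mem_coe] at hy
      beta_reduce; rw [add_assoc, ← add_smul]
      rw [show (r - Qg a' y)/t + (Qg a' y - r)/t = 0 by
        rw [← add_div, show r - Qg a' y + (Qg a' y - r) = 0 by ring, zero_div]]
      rw [zero_smul, add_zero]
    · intro z hz
      rw [Finset.mem_coe, Finset.mem_product] at hz
      obtain ⟨hz1, _⟩ := hz
      simp only [Finset.mem_filter, Finset.mem_univ, true_and] at hz1
      obtain ⟨hzq, hzb⟩ := hz1
      have hq2 : Qg a' (z.1 + ((z.2 - r)/t) • c) = z.2 := by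
        rw [hQadd, hzq, hzb, div_mul_cancel₀ _ ht]; ring
      have hfst : z.1 + ((z.2 - r)/t) • c + ((r - Qg a' (z.1 + ((z.2 - r)/t) • c))/t) • c
          = z.1 := by
        rw [hq2, add_assoc, ← add_smul]
        rw [show (z.2 - r)/t + (r - z.2)/t = 0 by
          rw [← add_div, show z.2 - r + (r - z.2) = 0 by ring, zero_div]]
        rw [zero_smul, add_zero]
      exact Prod.ext hfst hq2
  -- kernel cardinality
  have hker : (univ.filter fun y : Fin (2*m+1) → F => Bg a' y c = 0).card
      = Fintype.card F ^ (2*m) := by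
    have := fiber_card (n := 2*m+1) (by omega) (fun y => Bg a' y c)
      (fun u v => Bg_add_left a' u v c) (fun t u => Bg_smul_left a' t u c) hL
    simpa using this
  -- total over all fibers
  have htot : ∑ t : F, ((univ.filter fun y : Fin (2*m+1) → F => Bg a' y c = t).card : ℤ)
      = (Fintype.card F : ℤ) ^ (2*m+1) := by
    rw [← Nat.cast_sum]
    rw [← Finset.card_eq_sum_card_fiberwise
      (f := fun y : Fin (2*m+1) → F => Bg a' y c) (t := univ)
      (fun y (_ : y ∈ univ) => Finset.mem_univ _)]
    rw [Finset.card_univ, Fintype.card_fun, Fintype.card_fin]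
    push_cast; ring
  -- sphere decomposes along fibers
  have hsph : ∑ t : F, ((univ.filter fun y : Fin (2*m+1) → F =>
        Qg a' y = r ∧ Bg a' y c = t).card : ℤ)
      = ((univ.filter fun y : Fin (2*m+1) → F => Qg a' y = r).card : ℤ) := by
    rw [← Nat.cast_sum]
    congr 1
    rw [Finset.card_eq_sum_card_fiberwise
      (f := fun y : Fin (2*m+1) → F => Bg a' y c) (t := univ)
      (fun y (_ : y ∈ Finset.univ.filter fun y : Fin (2*m+1) → F => Qg a' y = r) =>
        Finset.mem_univ _)]
    apply Finset.sum_congr rfl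
    intro t _
    rw [Finset.filter_filter]
  -- now pure algebra over ℤ
  have hq0 : (Fintype.card F : ℤ) ≠ 0 := Int.natCast_ne_zero.mpr Fintype.card_ne_zero
  have hsplit1 : ((univ.filter fun y : Fin (2*m+1) → F => Bg a' y c = 0).card : ℤ)
      + ∑ t ∈ Finset.univ.erase (0:F),
          ((univ.filter fun y : Fin (2*m+1) → F => Bg a' y c = t).card : ℤ)
      = (Fintype.card F : ℤ) ^ (2*m+1) := by
    rw [Finset.add_sum_erase Finset.univ
      (fun t : F => ((univ.filter fun y : Fin (2*m+1) → F => Bg a' y c = t).card : ℤ))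
      (Finset.mem_univ (0:F))]
    exact htot
  have hsplit2 : ((univ.filter fun y : Fin (2*m+1) → F =>
        Qg a' y = r ∧ Bg a' y c = 0).card : ℤ)
      + ∑ t ∈ Finset.univ.erase (0:F),
          ((univ.filter fun y : Fin (2*m+1) → F => Qg a' y = r ∧ Bg a' y c = t).card : ℤ)
      = ((univ.filter fun y : Fin (2*m+1) → F => Qg a' y = r).card : ℤ) := by
    rw [Finset.add_sum_erase Finset.univ
      (fun t : F => ((univ.filter fun y : Fin (2*m+1) → F =>
        Qg a' y = r ∧ Bg a' y c = t).card : ℤ))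
      (Finset.mem_univ (0:F))]
    exact hsph
  have herase : ∑ t ∈ Finset.univ.erase (0:F),
      ((univ.filter fun y : Fin (2*m+1) → F => Bg a' y c = t).card : ℤ)
      = (∑ t ∈ Finset.univ.erase (0:F),
          ((univ.filter fun y : Fin (2*m+1) → F => Qg a' y = r ∧ Bg a' y c = t).card : ℤ))
        * (Fintype.card F : ℤ) := by
    rw [Finset.sum_mul]
    apply Finset.sum_congr rfl
    intro t htmem
    have ht : t ≠ 0 := Finset.ne_of_mem_erase htmem
    rw [hfib t ht]
    push_cast; ring
  have hcount := Qg_count hF ha' m r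
  have hkerZ : ((univ.filter fun y : Fin (2*m+1) → F => Bg a' y c = 0).card : ℤ)
      = (Fintype.card F : ℤ) ^ (2*m) := by
    rw [hker]; push_cast; ring
  -- solve for the target cardinality
  have hpow1 : (Fintype.card F : ℤ) ^ (2*m+1) = (Fintype.card F : ℤ) ^ (2*m) * (Fintype.card F : ℤ) :=
    pow_succ _ _
  have hpow2 : (Fintype.card F : ℤ) ^ (2*m) = (Fintype.card F : ℤ) ^ (2*m-1) * (Fintype.card F : ℤ) := by
    rw [← pow_succ]; congr 1; omega
  have hES : ∑ t ∈ Finset.univ.erase (0:F),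
      ((univ.filter fun y : Fin (2*m+1) → F => Qg a' y = r ∧ Bg a' y c = t).card : ℤ)
      = (Fintype.card F : ℤ) ^ (2*m) - (Fintype.card F : ℤ) ^ (2*m-1) := by
    apply mul_right_cancel₀ hq0
    rw [← herase]
    linear_combination hsplit1 - hkerZ + hpow1 - hpow2
  linear_combination hsplit2 - hES + hcount

end Stmt16Aux

/-- Intersection size of two `Q_i^d`-spheres (`i ∈ {3,4}`, odd `d`) with equal
radii and distinct centers at distance zero. -/
theorem stmt16 {F : Type*} [Field F] [Fintype F] [DecidableEq F]
    (hq : Odd (Fintype.card F)) {d : ℕ} (hd : 3 ≤ d) (hdodd : Odd d)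
    (i : ℕ) (hi : i = 3 ∨ i = 4) (a : F) (ha : ¬ IsSquare a)
    (c₁ c₂ : Fin d → F) (hc : c₁ ≠ c₂) (r : F)
    (ht : Qi a i (c₁ - c₂) = 0) :
    ((spherePts (Qi a i) (c₁, r) ∩ spherePts (Qi a i) (c₂, r)).card : ℤ)
      = (Fintype.card F : ℤ) ^ (d-2)
        + (-1) ^ (i+1) * quadraticChar F (-r) * (Fintype.card F : ℤ) ^ ((d-1)/2) := by
  classical
  obtain ⟨m, hm⟩ := hdodd
  have hd2 : d = 2*m+1 := by omega
  subst hd2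
  have hm1 : 1 ≤ m := by omega
  have hF : ringChar F ≠ 2 := by
    intro h
    have h2 := FiniteField.even_card_iff_char_two.mp h
    rcases hq with ⟨k, hk⟩
    omega
  have hcsub : c₁ - c₂ ≠ 0 := sub_ne_zero_of_ne hc
  have hbij : ∀ a' : F,
      (univ.filter (fun x : Fin (2*m+1) → F =>
          Stmt16Aux.Qg a' (x - c₁) = r ∧ Stmt16Aux.Qg a' (x - c₂) = r)).card
        = (univ.filter (fun y : Fin (2*m+1) → F =>
          Stmt16Aux.Qg a' y = r ∧ Stmt16Aux.Qg a' (y + (c₁ - c₂)) = r)).card := by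
    intro a'
    apply Finset.card_nbij' (fun x => x - c₁) (fun y => y + c₁)
    · intro x hx
      simp only [Finset.mem_filter, Finset.mem_univ, true_and, Finset.mem_coe] at hx ⊢
      refine ⟨hx.1, ?_⟩
      rw [sub_add_sub_cancel]
      exact hx.2
    · intro y hy
      simp only [Finset.mem_filter, Finset.mem_univ, true_and, Finset.mem_coe] at hy ⊢
      constructor
      · rw [add_sub_cancel_right]
        exact hy.1
      · rw [add_sub_assoc]
        exact hy.2
    · intro x _
      exact sub_add_cancel x c₁
    · intro y _
      exact add_sub_cancel_right y c₁
  rcases hi with hi | hi <;> subst hi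
  · -- i = 3
    have hQ : ∀ x : Fin (2*m+1) → F, Qi a 3 x = Stmt16Aux.Qg (1:F) x := by
      intro x
      show Q3form x = Stmt16Aux.Qg (1:F) x
      unfold Q3form Stmt16Aux.Qg
      simp only [one_mul]
    have hset : spherePts (Qi a 3) (c₁, r) ∩ spherePts (Qi a 3) (c₂, r)
        = univ.filter (fun x : Fin (2*m+1) → F =>
            Stmt16Aux.Qg (1:F) (x - c₁) = r ∧ Stmt16Aux.Qg (1:F) (x - c₂) = r) := by
      rw [Finset.filter_and]
      unfold spherePts
      congr 1
      · exact Finset.filter_congr (fun x _ => by rw [hQ])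
      · exact Finset.filter_congr (fun x _ => by rw [hQ])
    have hQc : Stmt16Aux.Qg (1:F) (c₁ - c₂) = 0 := by rw [← hQ]; exact ht
    rw [hset, hbij (1:F), Stmt16Aux.key hF one_ne_zero hm1 hcsub hQc r]
    have e1 : 2*m+1-2 = 2*m-1 := by omega
    have e2 : (2*m+1-1)/2 = m := by omega
    rw [e1, e2, map_one]
    norm_num
  · -- i = 4
    have ha0 : a ≠ 0 := by
      intro h
      exact ha (h ▸ (IsSquare.zero : IsSquare (0:F)))
    have hQ : ∀ x : Fin (2*m+1) → F, Qi a 4 x = Stmt16Aux.Qg a x := by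
      intro x
      show Q4form a x = Stmt16Aux.Qg a x
      rfl
    have hset : spherePts (Qi a 4) (c₁, r) ∩ spherePts (Qi a 4) (c₂, r)
        = univ.filter (fun x : Fin (2*m+1) → F =>
            Stmt16Aux.Qg a (x - c₁) = r ∧ Stmt16Aux.Qg a (x - c₂) = r) := by
      rw [Finset.filter_and]
      rfl
    have hQc : Stmt16Aux.Qg a (c₁ - c₂) = 0 := by rw [← hQ]; exact ht
    rw [hset, hbij a, Stmt16Aux.key hF ha0 hm1 hcsub hQc r]
    have e1 : 2*m+1-2 = 2*m-1 := by omega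
    have e2 : (2*m+1-1)/2 = m := by omega
    rw [e1, e2, quadraticChar_neg_one_iff_not_isSquare.mpr ha]
    norm_num
end

section
/- Let d ≥ 4 be even, let q be an odd prime power, let i ∈ {1,2}, and write Q = Q_i^d. Let s₁, s₂ be Q-spheres with centers c₁, c₂ and radii r₁, r₂ such that t := Q(c₁−c₂) ≠ 0. Then |s₁ ∩ s₂| = q^{d−2} + (−1)^{i+1}·η(D(t,r₁,r₂))·q^{(d−2)/2} (in particular, |s₁ ∩ s₂| = q^{d−2} when D(t,r₁,r₂) = 0, since η(0) = 0). -/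
open Finset

section Stmt17Aux
set_option linter.unusedSectionVars false
set_option maxHeartbeats 1000000
variable {F : Type*} [Field F] [Fintype F] [DecidableEq F]

lemma pairsForm_linComb {d n : ℕ} (k : ℕ) (γ : Fin n → F) (w : Fin n → Fin d → F)
    (h : ∀ (p r : Fin d), ∑ i, γ i * (w i p * w i r) = 0) :
    ∑ i, γ i * pairsForm k (w i) = 0 := by
  unfold pairsForm
  simp_rw [Finset.mul_sum]
  rw [Finset.sum_comm]
  refine Finset.sum_eq_zero fun j hj => ?_
  by_cases h2 : 2*j+1 < d
  · simp_rw [dif_pos h2]; exact h _ _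
  · simp [dif_neg h2]

lemma pairsForm_succ {d : ℕ} (k : ℕ) (hk : 2*k+1 < d) (x : Fin d → F) :
    pairsForm (k+1) x = pairsForm k x + x ⟨2*k, by omega⟩ * x ⟨2*k+1, hk⟩ := by
  unfold pairsForm
  rw [Finset.sum_range_succ, dif_pos hk]

lemma pairsForm_front {k n m : ℕ} (h : 2*k ≤ n) (x : Fin (n+m) → F) :
    pairsForm k (fun j : Fin n => x (Fin.castAdd m j)) = pairsForm k x := by
  unfold pairsForm
  refine Finset.sum_congr rfl fun j hj => ?_
  rw [Finset.mem_range] at hj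
  have h1 : 2*j+1 < n := by omega
  have h2 : 2*j+1 < n+m := by omega
  rw [dif_pos h1, dif_pos h2]
  congr 1 <;> exact congr_arg x (Fin.ext rfl)

noncomputable def splitE (n m : ℕ) : (Fin (n+m) → F) ≃ (Fin n → F) × (Fin m → F) :=
  (Equiv.arrowCongr (finSumFinEquiv (m := n) (n := m)).symm (Equiv.refl F)).trans
    (Equiv.sumArrowEquivProdArrow _ _ F)

lemma splitE_symm_castAdd {n m : ℕ} (y : Fin n → F) (z : Fin m → F) (j : Fin n) :
    (splitE n m).symm (y, z) (Fin.castAdd m j) = y j := by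
  simp [splitE, Equiv.arrowCongr, Equiv.sumArrowEquivProdArrow]

lemma splitE_symm_natAdd {n m : ℕ} (y : Fin n → F) (z : Fin m → F) (j : Fin m) :
    (splitE n m).symm (y, z) (Fin.natAdd n j) = z j := by
  simp [splitE, Equiv.arrowCongr, Equiv.sumArrowEquivProdArrow]

lemma sum_split (ψ : AddChar F ℂ) (n : ℕ) (φ : (Fin n → F) → F) (g : F → F → F) :
    ∑ x : Fin (n+2) → F,
      ψ (φ (fun j => x (Fin.castAdd 2 j)) + g (x ⟨n, by omega⟩) (x ⟨n+1, by omega⟩))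
      = (∑ y : Fin n → F, ψ (φ y)) * (∑ u : F, ∑ v : F, ψ (g u v)) := by
  rw [← Equiv.sum_comp ((splitE n 2).symm) (M := ℂ)]
  rw [Fintype.sum_prod_type]
  have h0 : ∀ (y : Fin n → F) (z : Fin 2 → F),
      (fun j => (splitE n 2).symm (y, z) (Fin.castAdd 2 j)) = y := by
    intro y z; funext j; exact splitE_symm_castAdd y z j
  have h1 : ∀ (y : Fin n → F) (z : Fin 2 → F),
      (splitE n 2).symm (y, z) ⟨n, by omega⟩ = z 0 := by
    intro y z
    have : (⟨n, by omega⟩ : Fin (n+2)) = Fin.natAdd n 0 := by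
      apply Fin.ext; simp
    rw [this, splitE_symm_natAdd]
  have h2 : ∀ (y : Fin n → F) (z : Fin 2 → F),
      (splitE n 2).symm (y, z) ⟨n+1, by omega⟩ = z 1 := by
    intro y z
    have : (⟨n+1, by omega⟩ : Fin (n+2)) = Fin.natAdd n 1 := by
      apply Fin.ext; simp
    rw [this, splitE_symm_natAdd]
  rw [Finset.sum_mul]
  refine Finset.sum_congr rfl fun y _ => ?_
  calc ∑ z : Fin 2 → F, ψ (φ (fun j => (splitE n 2).symm (y, z) (Fin.castAdd 2 j))
          + g ((splitE n 2).symm (y, z) ⟨n, by omega⟩) ((splitE n 2).symm (y, z) ⟨n+1, by omega⟩))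
      = ∑ z : Fin 2 → F, ψ (φ y) * ψ (g (z 0) (z 1)) := by
        refine Finset.sum_congr rfl fun z _ => ?_
        rw [h0, h1, h2, AddChar.map_add_eq_mul]
    _ = ψ (φ y) * (∑ u : F, ∑ v : F, ψ (g u v)) := by
        rw [← Finset.mul_sum]
        congr 1
        rw [← Equiv.sum_comp (piFinTwoEquiv fun _ => F).symm (fun z => ψ (g (z 0) (z 1))),
          Fintype.sum_prod_type]
        simp [piFinTwoEquiv]

noncomputable def chiC (F : Type*) [Field F] [Fintype F] [DecidableEq F] : MulChar F ℂ :=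
  (quadraticChar F).ringHomComp (Int.castRingHom ℂ)

lemma chiC_apply (x : F) : chiC F x = ((quadraticChar F x : ℤ) : ℂ) := rfl

lemma chiC_ne_one (hF2 : ringChar F ≠ 2) : chiC F ≠ 1 :=
  (MulChar.ringHomComp_ne_one_iff (by exact_mod_cast Int.cast_injective)).mpr
    (quadraticChar_ne_one hF2)

lemma chiC_quadratic : (chiC F).IsQuadratic :=
  (quadraticChar_isQuadratic F).comp _

lemma chiC_self_mul {s : F} (hs : s ≠ 0) : chiC F (s * s) = 1 := by
  rw [chiC_apply]
  have : s * s = s ^ 2 := (sq s).symm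
  rw [this, quadraticChar_sq_one' hs]
  norm_num

lemma chiC_sq_one {s : F} (hs : s ≠ 0) : chiC F s * chiC F s = 1 := by
  rw [← map_mul, chiC_self_mul hs]

lemma chiC_nonsquare {s : F} (hs : ¬ IsSquare s) : chiC F s = -1 := by
  rw [chiC_apply, quadraticChar_neg_one_iff_not_isSquare.mpr hs]; norm_num

lemma sum_psi_mul (ψ : AddChar F ℂ) (hψ : ψ.IsPrimitive) (u : F) :
    ∑ α : F, ψ (α * u) = if u = 0 then (Fintype.card F : ℂ) else 0 := by
  rw [AddChar.sum_mulShift u hψ]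
  split_ifs <;> simp

lemma gaussSum_shift (ψ : AddChar F ℂ) {s : F} (hs : s ≠ 0) :
    ∑ u : F, chiC F u * ψ (s * u) = chiC F s * gaussSum (chiC F) ψ := by
  have h := gaussSum_mulShift (chiC F) ψ (Units.mk0 s hs)
  simp only [Units.val_mk0] at h
  have h2 : gaussSum (chiC F) (AddChar.mulShift ψ s) = ∑ u : F, chiC F u * ψ (s * u) := by
    unfold gaussSum; simp [AddChar.mulShift_apply]
  rw [h2] at h
  calc ∑ u : F, chiC F u * ψ (s * u)
      = (chiC F s * chiC F s) * ∑ u : F, chiC F u * ψ (s * u) := by rw [chiC_sq_one hs]; ring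
    _ = chiC F s * gaussSum (chiC F) ψ := by rw [mul_assoc, h]

lemma sum_psi_sq (ψ : AddChar F ℂ) (hψ : ψ.IsPrimitive) (hF2 : ringChar F ≠ 2) {s : F}
    (hs : s ≠ 0) :
    ∑ x : F, ψ (s * x ^ 2) = chiC F s * gaussSum (chiC F) ψ := by
  have fib : ∀ u : F, ((univ.filter fun x : F => x ^ 2 = u).card : ℂ)
      = chiC F u + 1 := by
    intro u
    have := quadraticChar_card_sqrts hF2 u
    rw [chiC_apply]
    rw [Set.toFinset_setOf] at this
    exact_mod_cast congrArg (Int.cast : ℤ → ℂ) this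
  calc ∑ x : F, ψ (s * x ^ 2)
      = ∑ u : F, ∑ x ∈ univ.filter fun x : F => x ^ 2 = u, ψ (s * u) := by
        rw [Finset.sum_fiberwise_of_maps_to' (fun i _ => Finset.mem_univ _) (fun u => ψ (s * u))]
    _ = ∑ u : F, ((univ.filter fun x : F => x ^ 2 = u).card : ℂ) * ψ (s * u) := by
        refine Finset.sum_congr rfl fun u _ => ?_
        rw [Finset.sum_const, nsmul_eq_mul]
    _ = ∑ u : F, (chiC F u * ψ (s * u) + ψ (s * u)) := by
        refine Finset.sum_congr rfl fun u _ => ?_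
        rw [fib u]; ring
    _ = (∑ u : F, chiC F u * ψ (s * u)) + ∑ u : F, ψ (s * u) := Finset.sum_add_distrib
    _ = chiC F s * gaussSum (chiC F) ψ := by
        rw [gaussSum_shift ψ hs]
        have h0 : ∑ u : F, ψ (s * u) = 0 := by
          simp_rw [mul_comm s]
          rw [AddChar.sum_mulShift s hψ, if_neg hs, Nat.cast_zero]
        rw [h0, add_zero]

lemma sum_chi_psi (ψ : AddChar F ℂ) (hF2 : ringChar F ≠ 2) (w : F) :
    ∑ s : F, chiC F s * ψ (w * s) = chiC F w * gaussSum (chiC F) ψ := by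
  by_cases hw : w = 0
  · subst hw
    simp only [zero_mul, AddChar.map_zero_eq_one, mul_one]
    rw [MulChar.sum_eq_zero_of_ne_one (chiC_ne_one hF2), MulChar.map_zero]
    ring
  · exact gaussSum_shift ψ hw

lemma sum_psi_quad (ψ : AddChar F ℂ) (hψ : ψ.IsPrimitive) (hF2 : ringChar F ≠ 2) {A : F}
    (B : F) (hA : A ≠ 0) :
    ∑ x : F, ψ (A * x ^ 2 + B * x)
      = chiC F A * gaussSum (chiC F) ψ * ψ (-(B ^ 2) / (4 * A)) := by
  have h2 : (2 : F) ≠ 0 := Ring.two_ne_zero hF2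
  have h4 : (4 : F) ≠ 0 := by
    have : (4 : F) = 2 * 2 := by norm_num
    rw [this]; exact mul_ne_zero h2 h2
  have key : ∀ x : F, A * x ^ 2 + B * x = A * (x + B / (2 * A)) ^ 2 + -(B ^ 2) / (4 * A) := by
    intro x; field_simp; ring
  calc ∑ x : F, ψ (A * x ^ 2 + B * x)
      = ∑ x : F, ψ (A * (x + B / (2 * A)) ^ 2) * ψ (-(B ^ 2) / (4 * A)) := by
        refine Finset.sum_congr rfl fun x _ => ?_
        rw [key x, AddChar.map_add_eq_mul]
    _ = (∑ x : F, ψ (A * (x + B / (2 * A)) ^ 2)) * ψ (-(B ^ 2) / (4 * A)) := by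
        rw [Finset.sum_mul]
    _ = (∑ y : F, ψ (A * y ^ 2)) * ψ (-(B ^ 2) / (4 * A)) := by
        congr 1
        exact Fintype.sum_equiv (Equiv.addRight (B / (2 * A))) _ _ (fun x => rfl)
    _ = chiC F A * gaussSum (chiC F) ψ * ψ (-(B ^ 2) / (4 * A)) := by
        rw [sum_psi_sq ψ hψ hF2 hA]

lemma sum_pair (ψ : AddChar F ℂ) (hψ : ψ.IsPrimitive) {s : F} (hs : s ≠ 0) :
    ∑ u : F, ∑ v : F, ψ (s * (u * v)) = (Fintype.card F : ℂ) := by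
  calc ∑ u : F, ∑ v : F, ψ (s * (u * v))
      = ∑ u : F, ∑ v : F, ψ (v * (s * u)) := by
        refine Finset.sum_congr rfl fun u _ => Finset.sum_congr rfl fun v _ => ?_
        congr 1; ring
    _ = ∑ u : F, if s * u = 0 then (Fintype.card F : ℂ) else 0 := by
        refine Finset.sum_congr rfl fun u _ => sum_psi_mul ψ hψ _
    _ = ∑ u : F, if u = 0 then (Fintype.card F : ℂ) else 0 := by
        refine Finset.sum_congr rfl fun u _ => ?_
        by_cases hu : u = 0
        · simp [hu]
        · rw [if_neg (mul_ne_zero hs hu), if_neg hu]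
    _ = (Fintype.card F : ℂ) := by rw [Finset.sum_ite_eq' univ (0 : F)]; simp

lemma sum_tail2 (ψ : AddChar F ℂ) (hψ : ψ.IsPrimitive) (hF2 : ringChar F ≠ 2) {s a : F}
    (hs : s ≠ 0) (ha : ¬ IsSquare a) :
    ∑ u : F, ∑ v : F, ψ (s * (u ^ 2 - a * v ^ 2)) = -(Fintype.card F : ℂ) := by
  have ha0 : a ≠ 0 := fun h => ha (h ▸ ⟨0, by ring⟩)
  have hsa : -(s * a) ≠ 0 := by simp [hs, ha0]
  have hq2 := gaussSum_sq (chiC_ne_one hF2) (chiC_quadratic (F := F)) hψ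
  calc ∑ u : F, ∑ v : F, ψ (s * (u ^ 2 - a * v ^ 2))
      = ∑ u : F, ∑ v : F, ψ (s * u ^ 2) * ψ (-(s * a) * v ^ 2) := by
        refine Finset.sum_congr rfl fun u _ => Finset.sum_congr rfl fun v _ => ?_
        rw [← AddChar.map_add_eq_mul]; congr 1; ring
    _ = (∑ u : F, ψ (s * u ^ 2)) * (∑ v : F, ψ (-(s * a) * v ^ 2)) := by
        rw [← Finset.sum_mul_sum]
    _ = (chiC F s * gaussSum (chiC F) ψ) * (chiC F (-(s * a)) * gaussSum (chiC F) ψ) := by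
        rw [sum_psi_sq ψ hψ hF2 hs, sum_psi_sq ψ hψ hF2 hsa]
    _ = chiC F (s * -(s * a)) * (gaussSum (chiC F) ψ) ^ 2 := by
        rw [map_mul]; ring
    _ = -(Fintype.card F : ℂ) := by
        rw [hq2]
        have hdec : s * -(s * a) = (-1) * (s * s) * a := by ring
        rw [hdec, map_mul, map_mul, chiC_self_mul hs, chiC_nonsquare ha]
        have hm1 : chiC F (-1) * chiC F (-1) = 1 := chiC_sq_one (by
          intro h; exact one_ne_zero (neg_eq_zero.mp h))
        calc chiC F (-1) * 1 * -1 * (chiC F (-1) * (Fintype.card F : ℂ))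
            = (chiC F (-1) * chiC F (-1)) * (-(Fintype.card F : ℂ)) := by ring
          _ = -(Fintype.card F : ℂ) := by rw [hm1]; ring


lemma sum_pf (ψ : AddChar F ℂ) (hψ : ψ.IsPrimitive) {s : F} (hs : s ≠ 0) :
    ∀ (k n : ℕ), n = 2*k → ∑ x : Fin n → F, ψ (s * pairsForm k x) = (Fintype.card F : ℂ) ^ k := by
  intro k
  induction k with
  | zero =>
    intro n h; subst h
    have h0 : ∀ x : Fin (2*0) → F, ψ (s * pairsForm 0 x) = 1 := by
      intro x; simp [pairsForm]
    simp only [h0, Finset.sum_const, Finset.card_univ, nsmul_eq_mul, mul_one]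
    simp
  | succ k ih =>
    intro n h
    have h' : n = 2*k + 2 := by omega
    subst h'
    have hk : 2*k+1 < 2*k+2 := by omega
    have conv1 : ∀ x : Fin (2*k+2) → F,
        ψ (s * pairsForm (k+1) x)
          = ψ ((fun y : Fin (2*k) → F => s * pairsForm k y) (fun j => x (Fin.castAdd 2 j))
              + (fun u v : F => s * (u * v)) (x ⟨2*k, by omega⟩) (x ⟨2*k+1, by omega⟩)) := by
      intro x
      congr 1
      rw [pairsForm_succ k hk x, ← pairsForm_front (le_refl (2*k)) x]
      ring
    calc ∑ x : Fin (2*k+2) → F, ψ (s * pairsForm (k+1) x)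
        = ∑ x : Fin (2*k+2) → F,
            ψ ((fun y : Fin (2*k) → F => s * pairsForm k y) (fun j => x (Fin.castAdd 2 j))
              + (fun u v : F => s * (u * v)) (x ⟨2*k, by omega⟩) (x ⟨2*k+1, by omega⟩)) :=
          Finset.sum_congr rfl fun x _ => conv1 x
      _ = (∑ y : Fin (2*k) → F, ψ (s * pairsForm k y)) * (∑ u : F, ∑ v : F, ψ (s * (u * v))) :=
          sum_split ψ (2*k) (fun y => s * pairsForm k y) (fun u v => s * (u * v))
      _ = (Fintype.card F : ℂ) ^ k * (Fintype.card F : ℂ) := by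
          rw [ih (2*k) rfl, sum_pair ψ hψ hs]
      _ = (Fintype.card F : ℂ) ^ (k+1) := by ring

lemma sum_Q1 (ψ : AddChar F ℂ) (hψ : ψ.IsPrimitive)
    {d : ℕ} (he : Even d) (a : F) {s : F} (hs : s ≠ 0) :
    ∑ x : Fin d → F, ψ (s * Qi a 1 x) = (Fintype.card F : ℂ) ^ (d/2) := by
  obtain ⟨j, hj⟩ := he
  have hQ : ∀ x : Fin d → F, Qi a 1 x = pairsForm (d/2) x := fun _ => rfl
  simp only [hQ]
  exact sum_pf ψ hψ hs (d/2) d (by omega)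

lemma sum_Q2 (ψ : AddChar F ℂ) (hψ : ψ.IsPrimitive) (hF2 : ringChar F ≠ 2)
    {d : ℕ} (hd : 4 ≤ d) (he : Even d) {a : F}
    (ha : ¬ IsSquare a) {s : F} (hs : s ≠ 0) :
    ∑ x : Fin d → F, ψ (s * Qi a 2 x) = -(Fintype.card F : ℂ) ^ (d/2) := by
  obtain ⟨j, hj⟩ := he
  obtain ⟨k, hk⟩ : ∃ k, d = 2*k + 2 := ⟨(d-2)/2, by omega⟩
  subst hk
  have hk2 : (2*k+2-2)/2 = k := by omega
  have hd2 : 2 ≤ 2*k+2 := by omega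
  have hQ : ∀ x : Fin (2*k+2) → F, Qi a 2 x = Q2form a x := fun _ => rfl
  have conv1 : ∀ x : Fin (2*k+2) → F,
      ψ (s * Qi a 2 x)
        = ψ ((fun y : Fin (2*k) → F => s * pairsForm k y) (fun j => x (Fin.castAdd 2 j))
            + (fun u v : F => s * (u ^ 2 - a * v ^ 2))
                (x ⟨2*k, by omega⟩) (x ⟨2*k+1, by omega⟩)) := by
    intro x
    congr 1
    rw [hQ]
    unfold Q2form
    rw [dif_pos hd2, hk2, ← pairsForm_front (le_refl (2*k)) x]
    have e1 : x ⟨2*k+2-2, by omega⟩ = x ⟨2*k, by omega⟩ := by congr 1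
    have e2 : x ⟨2*k+2-1, by omega⟩ = x ⟨2*k+1, by omega⟩ := by congr 1
    rw [e1, e2]
    ring
  calc ∑ x : Fin (2*k+2) → F, ψ (s * Qi a 2 x)
      = ∑ x : Fin (2*k+2) → F,
          ψ ((fun y : Fin (2*k) → F => s * pairsForm k y) (fun j => x (Fin.castAdd 2 j))
            + (fun u v : F => s * (u ^ 2 - a * v ^ 2))
                (x ⟨2*k, by omega⟩) (x ⟨2*k+1, by omega⟩)) :=
        Finset.sum_congr rfl fun x _ => conv1 x
    _ = (∑ y : Fin (2*k) → F, ψ (s * pairsForm k y))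
          * (∑ u : F, ∑ v : F, ψ (s * (u ^ 2 - a * v ^ 2))) :=
          sum_split ψ (2*k) (fun y => s * pairsForm k y) (fun u v => s * (u ^ 2 - a * v ^ 2))
    _ = (Fintype.card F : ℂ) ^ k * -(Fintype.card F : ℂ) := by
        rw [sum_pf ψ hψ hs k (2*k) rfl, sum_tail2 ψ hψ hF2 hs ha]
    _ = -(Fintype.card F : ℂ) ^ ((2*k+2)/2) := by
        have e3 : (2*k+2)/2 = k + 1 := by omega
        rw [e3]; ring

lemma Qi_linComb {d n : ℕ} {a : F} {i : ℕ} (hi : i = 1 ∨ i = 2) (γ : Fin n → F)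
    (w : Fin n → Fin d → F)
    (h : ∀ p r : Fin d, ∑ l, γ l * (w l p * w l r) = 0) :
    ∑ l, γ l * Qi a i (w l) = 0 := by
  rcases hi with rfl | rfl
  · have hQ : ∀ x : Fin d → F, Qi a 1 x = pairsForm (d/2) x := fun x => rfl
    simp only [hQ]
    exact pairsForm_linComb _ γ w h
  · have hQ : ∀ x : Fin d → F, Qi a 2 x = Q2form a x := fun x => rfl
    simp only [hQ]
    unfold Q2form
    by_cases hd2 : 2 ≤ d
    · simp only [dif_pos hd2]
      have expand : ∀ l, γ l * (pairsForm ((d-2)/2) (w l)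
            + (w l ⟨d-2, by omega⟩ ^ 2 - a * w l ⟨d-1, by omega⟩ ^ 2))
          = γ l * pairsForm ((d-2)/2) (w l)
            + (γ l * (w l ⟨d-2, by omega⟩ * w l ⟨d-2, by omega⟩)
              - a * (γ l * (w l ⟨d-1, by omega⟩ * w l ⟨d-1, by omega⟩))) := by
        intro l; ring
      simp only [expand]
      rw [Finset.sum_add_distrib, pairsForm_linComb _ γ w h, Finset.sum_sub_distrib,
        h ⟨d-2, by omega⟩ ⟨d-2, by omega⟩, ← Finset.mul_sum, h ⟨d-1, by omega⟩ ⟨d-1, by omega⟩]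
      ring
    · simp only [dif_neg hd2, add_zero]
      exact pairsForm_linComb _ γ w h

lemma sum_shift (ψ : AddChar F ℂ) (hψ : ψ.IsPrimitive) {d : ℕ} (f : (Fin d → F) → F)
    (c0 : Fin d → F) {δ : F} (hδ : δ ≠ 0)
    (hf : ∀ (y : Fin d → F) (lam : F), f (y + lam • c0) = f y + lam * δ) :
    ∑ y : Fin d → F, ψ (f y) = 0 := by
  have hq0 : (Fintype.card F : ℂ) ≠ 0 := Nat.cast_ne_zero.mpr Fintype.card_ne_zero
  have h1 : ∀ lam : F, ∑ y : Fin d → F, ψ (f y) = ψ (lam * δ) * ∑ y : Fin d → F, ψ (f y) := by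
    intro lam
    calc ∑ y : Fin d → F, ψ (f y)
        = ∑ y : Fin d → F, ψ (f (y + lam • c0)) :=
          (Fintype.sum_equiv (Equiv.addRight (lam • c0))
            (fun y => ψ (f (y + lam • c0))) (fun y => ψ (f y)) (fun y => rfl)).symm
      _ = ∑ y : Fin d → F, ψ (lam * δ) * ψ (f y) := by
          refine Finset.sum_congr rfl fun y _ => ?_
          rw [hf y lam, AddChar.map_add_eq_mul]; ring
      _ = ψ (lam * δ) * ∑ y : Fin d → F, ψ (f y) := by rw [Finset.mul_sum]
  have h2 : (Fintype.card F : ℂ) * ∑ y : Fin d → F, ψ (f y)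
      = (∑ lam : F, ψ (lam * δ)) * ∑ y : Fin d → F, ψ (f y) := by
    rw [Finset.sum_mul]
    calc (Fintype.card F : ℂ) * ∑ y : Fin d → F, ψ (f y)
        = ∑ _lam : F, ∑ y : Fin d → F, ψ (f y) := by
          rw [Finset.sum_const, Finset.card_univ, nsmul_eq_mul]
      _ = ∑ lam : F, ψ (lam * δ) * ∑ y : Fin d → F, ψ (f y) :=
          Finset.sum_congr rfl fun lam _ => h1 lam
  rw [sum_psi_mul ψ hψ δ, if_neg hδ, zero_mul] at h2
  rcases mul_eq_zero.mp h2 with h | h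
  · exact absurd h hq0
  · exact h

lemma chiC_inv {s : F} (hs : s ≠ 0) : chiC F s⁻¹ = chiC F s := by
  have h1 : chiC F s * chiC F s⁻¹ = 1 := by
    rw [← map_mul, mul_inv_cancel₀ hs, map_one]
  have h2 : chiC F s * chiC F s = 1 := chiC_sq_one hs
  have hne : chiC F s ≠ 0 := fun h => by rw [h, zero_mul] at h2; exact one_ne_zero h2.symm
  exact mul_left_cancel₀ hne (h1.trans h2.symm)

end Stmt17Aux

/-- Intersection size of two `Q_i^d`-spheres (`i ∈ {1,2}`, even `d`) whose
centers are at non-zero distance `t`. -/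
theorem stmt17 {F : Type*} [Field F] [Fintype F] [DecidableEq F]
    (hq : Odd (Fintype.card F)) {d : ℕ} (hd : 4 ≤ d) (hdeven : Even d)
    (i : ℕ) (hi : i = 1 ∨ i = 2) (a : F) (ha : ¬ IsSquare a)
    (c₁ c₂ : Fin d → F) (r₁ r₂ : F) (t : F)
    (htdef : t = Qi a i (c₁ - c₂)) (ht : t ≠ 0) :
    ((spherePts (Qi a i) (c₁, r₁) ∩ spherePts (Qi a i) (c₂, r₂)).card : ℤ)
      = (Fintype.card F : ℤ) ^ (d-2)
        + (-1) ^ (i+1) * quadraticChar F (t^2 + r₁^2 + r₂^2 - 2*(t*r₁ + t*r₂ + r₁*r₂))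
            * (Fintype.card F : ℤ) ^ ((d-2)/2) := by
  classical
  have hF2 : ringChar F ≠ 2 := by
    intro h
    have := FiniteField.even_card_of_char_two (F := F) h
    rcases hq with ⟨k, hk⟩; omega
  have h2F : (2 : F) ≠ 0 := Ring.two_ne_zero hF2
  have hq0 : (Fintype.card F : ℂ) ≠ 0 := Nat.cast_ne_zero.mpr Fintype.card_ne_zero
  set ψ : AddChar F ℂ := AddChar.FiniteField.primitiveChar_to_Complex F with hψdef
  have hψ : ψ.IsPrimitive := AddChar.FiniteField.primitiveChar_to_Complex_isPrimitive F
  set G : ℂ := gaussSum (chiC F) ψ with hGdef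
  set D : F := t^2 + r₁^2 + r₂^2 - 2*(t*r₁ + t*r₂ + r₁*r₂) with hDdef
  set εc : ℂ := if i = 1 then 1 else -1 with hεcdef
  set Q : (Fin d → F) → F := Qi a i with hQdef
  -- evaluation of the complete Gauss-type sum of Q
  have hQval : ∀ s : F, s ≠ 0 →
      ∑ x : Fin d → F, ψ (s * Q x) = εc * (Fintype.card F : ℂ) ^ (d/2) := by
    intro s hs
    rcases hi with h1 | h2
    · rw [hQdef, h1, sum_Q1 ψ hψ hdeven a hs, hεcdef, h1, if_pos rfl, one_mul]
    · rw [hQdef, h2, sum_Q2 ψ hψ hF2 hd hdeven ha hs, hεcdef, h2, if_neg (by norm_num)]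
      ring
  -- the intersection as a filter
  have hset : spherePts (Qi a i) (c₁, r₁) ∩ spherePts (Qi a i) (c₂, r₂)
      = Finset.univ.filter (fun x : Fin d → F => Q (x - c₁) = r₁ ∧ Q (x - c₂) = r₂) := by
    ext x
    simp [spherePts, Finset.mem_inter, Finset.mem_filter, hQdef]
  set N : ℕ := (Finset.univ.filter
      (fun x : Fin d → F => Q (x - c₁) = r₁ ∧ Q (x - c₂) = r₂)).card with hNdef
  -- Step 1: the count as a double character sum
  have hNC : (N : ℂ) * (Fintype.card F : ℂ) ^ 2
      = ∑ p : F × F, ∑ x : Fin d → F,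
          ψ (p.1 * (Q (x - c₁) - r₁) + p.2 * (Q (x - c₂) - r₂)) := by
    have hN1 : (N : ℂ) = ∑ x : Fin d → F,
        if Q (x - c₁) = r₁ ∧ Q (x - c₂) = r₂ then (1 : ℂ) else 0 := by
      rw [hNdef, Finset.card_filter]
      push_cast
      exact Finset.sum_congr rfl fun x _ => by split_ifs <;> norm_num
    calc (N : ℂ) * (Fintype.card F : ℂ) ^ 2
        = ∑ x : Fin d → F,
            (if Q (x - c₁) - r₁ = 0 then (Fintype.card F : ℂ) else 0)
            * (if Q (x - c₂) - r₂ = 0 then (Fintype.card F : ℂ) else 0) := by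
          rw [hN1, Finset.sum_mul]
          refine Finset.sum_congr rfl fun x _ => ?_
          by_cases h1 : Q (x - c₁) = r₁ <;> by_cases h2 : Q (x - c₂) = r₂ <;>
            simp [h1, h2, sub_eq_zero, pow_two]
      _ = ∑ x : Fin d → F,
            (∑ α : F, ψ (α * (Q (x - c₁) - r₁))) * (∑ β : F, ψ (β * (Q (x - c₂) - r₂))) := by
          refine Finset.sum_congr rfl fun x _ => ?_
          rw [sum_psi_mul ψ hψ (Q (x - c₁) - r₁), sum_psi_mul ψ hψ (Q (x - c₂) - r₂)]
      _ = ∑ x : Fin d → F, ∑ p : F × F,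
            ψ (p.1 * (Q (x - c₁) - r₁) + p.2 * (Q (x - c₂) - r₂)) := by
          refine Finset.sum_congr rfl fun x _ => ?_
          rw [Finset.sum_mul_sum, Fintype.sum_prod_type]
          exact Finset.sum_congr rfl fun α _ => Finset.sum_congr rfl fun β _ =>
            (AddChar.map_add_eq_mul ψ _ _).symm
      _ = ∑ p : F × F, ∑ x : Fin d → F,
            ψ (p.1 * (Q (x - c₁) - r₁) + p.2 * (Q (x - c₂) - r₂)) := Finset.sum_comm
  -- Part A : diagonal p.1 + p.2 = 0
  have hA : ∑ p ∈ Finset.univ.filter (fun p : F × F => p.1 + p.2 = 0),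
      ∑ x : Fin d → F, ψ (p.1 * (Q (x - c₁) - r₁) + p.2 * (Q (x - c₂) - r₂))
      = (Fintype.card F : ℂ) ^ d := by
    have h1 : ∑ p ∈ Finset.univ.filter (fun p : F × F => p.1 + p.2 = 0),
        ∑ x : Fin d → F, ψ (p.1 * (Q (x - c₁) - r₁) + p.2 * (Q (x - c₂) - r₂))
        = ∑ α : F, ∑ x : Fin d → F,
            ψ (α * (Q (x - c₁) - r₁) + (-α) * (Q (x - c₂) - r₂)) := by
      refine Finset.sum_nbij' (fun p => p.1) (fun α => (α, -α)) ?_ ?_ ?_ ?_ ?_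
      · intro p _; exact Finset.mem_univ _
      · intro α _; simp
      · intro p hp
        have h2 := (Finset.mem_filter.mp hp).2
        have : p.2 = -p.1 := by linear_combination h2
        exact Prod.ext rfl this.symm
      · intro α _; rfl
      · intro p hp
        have h2 := (Finset.mem_filter.mp hp).2
        have hp2 : p.2 = -p.1 := by linear_combination h2
        rw [hp2]
    rw [h1]
    have hrest : ∀ α ∈ (Finset.univ : Finset F), α ≠ 0 →
        ∑ x : Fin d → F, ψ (α * (Q (x - c₁) - r₁) + (-α) * (Q (x - c₂) - r₂)) = 0 := by
      intro α _ hα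
      refine sum_shift ψ hψ _ (c₁ - c₂)
        (δ := -(2*α*t)) (neg_ne_zero.mpr (mul_ne_zero (mul_ne_zero h2F hα) ht)) ?_
      intro y lam
      have idB := Qi_linComb (a := a) hi ![1, -1, -1, 1, 2*lam]
        ![y + lam • (c₁ - c₂) - c₁, y + lam • (c₁ - c₂) - c₂, y - c₁, y - c₂, c₁ - c₂] ?hpt
      case hpt =>
        intro p r
        simp only [Fin.sum_univ_five, Matrix.cons_val_zero, Matrix.cons_val_one,
          Matrix.head_cons, Matrix.cons_val_two, Matrix.tail_cons, Matrix.cons_val_three,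
          Matrix.cons_val_four, Pi.add_apply, Pi.sub_apply, Pi.smul_apply, smul_eq_mul]
        ring_nf
        try ring
        try { simp [Pi.add_apply, Pi.sub_apply, Pi.smul_apply, smul_eq_mul]; ring }
      simp [Fin.sum_univ_five] at idB
      linear_combination α * idB + 2*lam*α*htdef
    rw [Finset.sum_eq_single_of_mem (0 : F) (Finset.mem_univ 0) hrest]
    have h0 : ∀ x : Fin d → F,
        ψ ((0:F) * (Q (x - c₁) - r₁) + (-(0:F)) * (Q (x - c₂) - r₂)) = 1 := by
      intro x
      norm_num
    simp only [h0, Finset.sum_const, Finset.card_univ, nsmul_eq_mul, mul_one]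
    rw [Fintype.card_fun, Fintype.card_fin]
    push_cast
    ring
  -- Part B : s = p.1 + p.2 ≠ 0
  set Bc : F := t - r₁ + r₂ with hBcdef
  set w : F := Bc^2/(4*t) - r₂ with hwdef
  have hB : ∑ p ∈ Finset.univ.filter (fun p : F × F => ¬ p.1 + p.2 = 0),
      ∑ x : Fin d → F, ψ (p.1 * (Q (x - c₁) - r₁) + p.2 * (Q (x - c₂) - r₂))
      = εc * chiC F D * (Fintype.card F : ℂ) ^ (d/2 + 1) := by
    have h1 : ∑ p ∈ Finset.univ.filter (fun p : F × F => ¬ p.1 + p.2 = 0),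
        ∑ x : Fin d → F, ψ (p.1 * (Q (x - c₁) - r₁) + p.2 * (Q (x - c₂) - r₂))
        = ∑ p ∈ (Finset.univ.filter (fun s : F => ¬ s = 0)) ×ˢ Finset.univ,
            ∑ x : Fin d → F, ψ (p.2 * (Q (x - c₁) - r₁) + (p.1 - p.2) * (Q (x - c₂) - r₂)) := by
      refine Finset.sum_nbij' (fun p => (p.1 + p.2, p.1)) (fun p => (p.2, p.1 - p.2))
        ?_ ?_ ?_ ?_ ?_
      · intro p hp
        rw [Finset.mem_product]
        exact ⟨Finset.mem_filter.mpr ⟨Finset.mem_univ _, (Finset.mem_filter.mp hp).2⟩,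
          Finset.mem_univ _⟩
      · intro p hp
        rw [Finset.mem_product] at hp
        have h2 := (Finset.mem_filter.mp hp.1).2
        refine Finset.mem_filter.mpr ⟨Finset.mem_univ _, ?_⟩
        intro hcon
        exact h2 (by linear_combination hcon)
      · intro p _
        apply Prod.ext
        · rfl
        · show p.1 + p.2 - p.1 = p.2
          ring
      · intro p _
        apply Prod.ext
        · show p.2 + (p.1 - p.2) = p.1
          ring
        · rfl
      · intro p _
        have e1 : (p.1 + p.2, p.1).2 = p.1 := rfl
        have e2 : (p.1 + p.2, p.1).1 - (p.1 + p.2, p.1).2 = p.2 := by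
          show p.1 + p.2 - p.1 = p.2; ring
        rw [e1, e2]
    rw [h1, Finset.sum_product]
    have hΞ : ∀ s : F, s ≠ 0 →
        ∑ α : F, ∑ x : Fin d → F,
          ψ (α * (Q (x - c₁) - r₁) + (s - α) * (Q (x - c₂) - r₂))
        = εc * (Fintype.card F : ℂ)^(d/2)
            * (chiC F (-t) * (chiC F s * (G * ψ (w * s)))) := by
      intro s hs
      have hA0 : -(t/s) ≠ 0 := neg_ne_zero.mpr (div_ne_zero ht hs)
      have hφ : ∀ α : F,
          ∑ x : Fin d → F, ψ (α * (Q (x - c₁) - r₁) + (s - α) * (Q (x - c₂) - r₂))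
          = ψ (-(t/s) * α^2 + Bc * α + -(s*r₂)) * (εc * (Fintype.card F : ℂ)^(d/2)) := by
        intro α
        have idA : ∀ x : Fin d → F,
            α * Q (x - c₁) + (s - α) * Q (x - c₂)
              = s * Q (x - fun j => s⁻¹ * (α * c₁ j + (s - α) * c₂ j))
                + (α*(s-α)/s) * Q (c₁ - c₂) := by
          intro x
          have h0 := Qi_linComb (a := a) hi ![α, s - α, -s, -(α*(s-α)/s)]
            ![x - c₁, x - c₂, x - fun j => s⁻¹ * (α * c₁ j + (s - α) * c₂ j), c₁ - c₂] ?hpt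
          case hpt =>
            intro p r
            simp only [Fin.sum_univ_four, Matrix.cons_val_zero, Matrix.cons_val_one,
              Matrix.head_cons, Matrix.cons_val_two, Matrix.tail_cons, Matrix.cons_val_three,
              Pi.sub_apply]
            field_simp
            ring
          simp [Fin.sum_univ_four] at h0
          linear_combination h0
        calc ∑ x : Fin d → F, ψ (α * (Q (x - c₁) - r₁) + (s - α) * (Q (x - c₂) - r₂))
            = ∑ x : Fin d → F,
                ψ (s * Q (x - fun j => s⁻¹ * (α * c₁ j + (s - α) * c₂ j))
                  + (-(t/s) * α^2 + Bc * α + -(s*r₂))) := by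
              refine Finset.sum_congr rfl fun x _ => ?_
              congr 1
              have e := idA x
              rw [← htdef] at e
              have e2 : (α*(s-α)/s) * t - α * r₁ - (s - α) * r₂
                  = -(t/s) * α^2 + Bc * α + -(s*r₂) := by
                rw [hBcdef]
                field_simp
                ring
              linear_combination e + e2
          _ = ψ (-(t/s) * α^2 + Bc * α + -(s*r₂))
                * ∑ x : Fin d → F,
                    ψ (s * Q (x - fun j => s⁻¹ * (α * c₁ j + (s - α) * c₂ j))) := by
              have hmul : ∀ x : Fin d → F,
                  ψ (s * Q (x - fun j => s⁻¹ * (α * c₁ j + (s - α) * c₂ j))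
                    + (-(t/s) * α^2 + Bc * α + -(s*r₂)))
                  = ψ (-(t/s) * α^2 + Bc * α + -(s*r₂))
                    * ψ (s * Q (x - fun j => s⁻¹ * (α * c₁ j + (s - α) * c₂ j))) := by
                intro x
                rw [AddChar.map_add_eq_mul]
                ring
              simp only [hmul]
              rw [← Finset.mul_sum]
          _ = ψ (-(t/s) * α^2 + Bc * α + -(s*r₂)) * ∑ y : Fin d → F, ψ (s * Q y) := by
              congr 1
              exact Fintype.sum_equiv
                (Equiv.subRight (fun j => s⁻¹ * (α * c₁ j + (s - α) * c₂ j))) _ _ (fun x => rfl)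
          _ = ψ (-(t/s) * α^2 + Bc * α + -(s*r₂)) * (εc * (Fintype.card F : ℂ)^(d/2)) := by
              rw [hQval s hs]
      simp only [hφ]
      rw [← Finset.sum_mul]
      have hsum : ∑ α : F, ψ (-(t/s) * α^2 + Bc * α + -(s*r₂))
          = chiC F (-t) * (chiC F s * (G * ψ (w * s))) := by
        have hsplit2 : ∀ α : F, ψ (-(t/s) * α^2 + Bc * α + -(s*r₂))
            = ψ (-(t/s) * α^2 + Bc * α) * ψ (-(s*r₂)) := fun α => by
          rw [← AddChar.map_add_eq_mul]
        simp only [hsplit2]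
        rw [← Finset.sum_mul, sum_psi_quad ψ hψ hF2 Bc hA0]
        have hψw : ψ (-(Bc^2) / (4 * -(t/s))) * ψ (-(s*r₂)) = ψ (w * s) := by
          rw [← AddChar.map_add_eq_mul]
          congr 1
          rw [hwdef]
          field_simp
          ring
        have hχA : chiC F (-(t/s)) = chiC F (-t) * chiC F s := by
          rw [div_eq_mul_inv, ← neg_mul, map_mul, chiC_inv hs]
        calc chiC F (-(t/s)) * G * ψ (-(Bc^2)/(4 * -(t/s))) * ψ (-(s*r₂))
            = chiC F (-(t/s)) * G * (ψ (-(Bc^2)/(4 * -(t/s))) * ψ (-(s*r₂))) := by ring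
          _ = chiC F (-t) * (chiC F s * (G * ψ (w * s))) := by rw [hψw, hχA]; ring
      rw [hsum]
      ring
    have h2 : ∑ s ∈ Finset.univ.filter (fun s : F => ¬ s = 0), ∑ α : F,
        ∑ x : Fin d → F, ψ (α * (Q (x - c₁) - r₁) + (s - α) * (Q (x - c₂) - r₂))
        = (εc * (Fintype.card F : ℂ)^(d/2) * (chiC F (-t) * G))
            * ∑ s ∈ Finset.univ.filter (fun s : F => ¬ s = 0), chiC F s * ψ (w * s) := by
      calc ∑ s ∈ Finset.univ.filter (fun s : F => ¬ s = 0), ∑ α : F,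
          ∑ x : Fin d → F, ψ (α * (Q (x - c₁) - r₁) + (s - α) * (Q (x - c₂) - r₂))
          = ∑ s ∈ Finset.univ.filter (fun s : F => ¬ s = 0),
              (εc * (Fintype.card F : ℂ)^(d/2) * (chiC F (-t) * G)) * (chiC F s * ψ (w * s)) := by
            refine Finset.sum_congr rfl fun s hs => ?_
            rw [hΞ s (by simpa using (Finset.mem_filter.mp hs).2)]
            ring
        _ = _ := by rw [← Finset.mul_sum]
    have h3 : ∑ s ∈ Finset.univ.filter (fun s : F => ¬ s = 0), chiC F s * ψ (w * s)
        = chiC F w * G := by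
      rw [← sum_chi_psi ψ hF2 w]
      apply Finset.sum_subset (Finset.filter_subset _ _)
      intro x _ hx
      have hx0 : x = 0 := by simpa using hx
      rw [hx0, MulChar.map_zero, zero_mul]
    rw [h2, h3]
    have hG2 : G^2 = chiC F (-1) * (Fintype.card F : ℂ) :=
      gaussSum_sq (chiC_ne_one hF2) (chiC_quadratic) hψ
    have h4t : (4:F) * t ≠ 0 := by
      have h4 : (4:F) ≠ 0 := by
        have : (4:F) = 2*2 := by norm_num
        rw [this]; exact mul_ne_zero h2F h2F
      exact mul_ne_zero h4 ht
    have hDtw : D = (t*w) * (2*2) := by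
      have hw4 : w * (4*t) = Bc^2 - 4*t*r₂ := by
        rw [hwdef, sub_mul, div_mul_cancel₀ _ h4t]; ring
      linear_combination hDdef - hw4 - (Bc + t - r₁ + r₂) * hBcdef
    have hχD : chiC F D = chiC F (-t) * chiC F w * chiC F (-1) := by
      have hcomb : chiC F (-t) * chiC F w * chiC F (-1) = chiC F (t*w) := by
        rw [← map_mul, ← map_mul]
        congr 1
        ring
      rw [hDtw, map_mul, chiC_self_mul h2F, mul_one, hcomb]
    calc (εc * (Fintype.card F : ℂ)^(d/2) * (chiC F (-t) * G)) * (chiC F w * G)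
        = εc * (chiC F (-t) * chiC F w * chiC F (-1)) * (Fintype.card F : ℂ)^(d/2)
            * (Fintype.card F : ℂ) := by
          have : chiC F (-t) * G * (chiC F w * G) = chiC F (-t) * chiC F w * G^2 := by ring
          calc (εc * (Fintype.card F : ℂ)^(d/2) * (chiC F (-t) * G)) * (chiC F w * G)
              = εc * (Fintype.card F : ℂ)^(d/2) * (chiC F (-t) * chiC F w * G^2) := by ring
            _ = _ := by rw [hG2]; ring
      _ = εc * chiC F D * (Fintype.card F : ℂ) ^ (d/2 + 1) := by
          rw [hχD, pow_succ]
          ring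
  -- assemble the complex identity
  have main : (N : ℂ) * (Fintype.card F : ℂ)^2
      = (Fintype.card F : ℂ)^d + εc * chiC F D * (Fintype.card F : ℂ)^(d/2 + 1) := by
    rw [hNC, ← Finset.sum_filter_add_sum_filter_not Finset.univ
      (fun p : F × F => p.1 + p.2 = 0), hA, hB]
  -- conversion to the integer statement
  obtain ⟨dj, hdj⟩ := hdeven
  have e1 : d - 2 + 2 = d := by omega
  have e2 : (d-2)/2 + 2 = d/2 + 1 := by omega
  have hqz : (Fintype.card F : ℤ) ≠ 0 := Int.natCast_ne_zero.mpr Fintype.card_ne_zero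
  have key_int : (N : ℤ) * (Fintype.card F : ℤ)^2
      = (Fintype.card F : ℤ)^d
        + (-1)^(i+1) * (quadraticChar F D : ℤ) * (Fintype.card F : ℤ)^(d/2+1) := by
    have hεm : εc = (((-1 : ℤ)^(i+1) : ℤ) : ℂ) := by
      rcases hi with rfl | rfl
      · rw [hεcdef]; norm_num
      · rw [hεcdef]; norm_num
    rw [hεm, chiC_apply] at main
    exact_mod_cast main
  rw [hset]
  show (N : ℤ) = (Fintype.card F : ℤ) ^ (d-2)
      + (-1)^(i+1) * (quadraticChar F D : ℤ) * (Fintype.card F : ℤ) ^ ((d-2)/2)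
  have expand : ((Fintype.card F : ℤ)^(d-2)
        + (-1)^(i+1) * (quadraticChar F D : ℤ) * (Fintype.card F : ℤ)^((d-2)/2))
        * (Fintype.card F : ℤ)^2
      = (Fintype.card F : ℤ)^d
        + (-1)^(i+1) * (quadraticChar F D : ℤ) * (Fintype.card F : ℤ)^(d/2+1) := by
    rw [add_mul, mul_assoc, ← pow_add, ← pow_add, e1, e2]
  apply mul_right_cancel₀ (pow_ne_zero 2 hqz)
  rw [key_int, ← expand]
end
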